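/- arXiv:1903.00108 — 6 statements merged into one kernel-verified Lean document; each statement's English description precedes it below -/
import Mathlib

section
/- For any two orthogonal projections Q₁, Q₂ on a finite-dimensional complex Hilbert space, the operator inequality Q₁Q₂ + Q₂Q₁ ≥ -‖Q₁Q₂ - Q₁∧Q₂‖ (Q₁ + Q₂) holds, where Q₁∧Q₂ denotes the orthogonal projection onto range(Q₁) ∩ range(Q₂). -/
open scoped InnerProductSpace

/-- The orthogonal projection onto a submodule, as an operator on the whole space. -/
noncomputable def projOf {E : Type*} [NormedAddCommGroup E] [InnerProductSpace ℂ E]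
    [FiniteDimensional ℂ E] (K : Submodule ℂ E) : E →L[ℂ] E :=
  K.subtypeL.comp K.orthogonalProjectionOnto

/-- Fannes–Nachtergaele–Werner anticommutator bound:
`Q₁Q₂ + Q₂Q₁ ≥ -‖Q₁Q₂ - Q₁∧Q₂‖ (Q₁ + Q₂)` for orthogonal projections `Q₁, Q₂`. -/
theorem stmt0 {E : Type*} [NormedAddCommGroup E] [InnerProductSpace ℂ E]
    [FiniteDimensional ℂ E] (Q₁ Q₂ : E →L[ℂ] E)
    (h₁sa : IsSelfAdjoint Q₁) (h₁id : IsIdempotentElem Q₁)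
    (h₂sa : IsSelfAdjoint Q₂) (h₂id : IsIdempotentElem Q₂) :
    (Q₁ * Q₂ + Q₂ * Q₁ +
      ‖Q₁ * Q₂ - projOf (LinearMap.range (Q₁ : E →ₗ[ℂ] E) ⊓ LinearMap.range (Q₂ : E →ₗ[ℂ] E))‖ • (Q₁ + Q₂)).IsPositive := by
  classical
  set K : Submodule ℂ E := LinearMap.range (Q₁ : E →ₗ[ℂ] E) ⊓ LinearMap.range (Q₂ : E →ₗ[ℂ] E) with hK
  set P : E →L[ℂ] E := projOf K with hPdef
  have hPsa : IsSelfAdjoint P := isSelfAdjoint_starProjection K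
  have hPmem : ∀ x, P x ∈ K := fun x => (K.orthogonalProjectionOnto x).2
  -- Q₁ fixes its range
  have hfix1 : ∀ y ∈ LinearMap.range (Q₁ : E →ₗ[ℂ] E), Q₁ y = y := by
    rintro y ⟨z, rfl⟩
    have : (Q₁ * Q₁) z = Q₁ z := by rw [h₁id.eq]
    simpa [ContinuousLinearMap.mul_apply] using this
  have hfix2 : ∀ y ∈ LinearMap.range (Q₂ : E →ₗ[ℂ] E), Q₂ y = y := by
    rintro y ⟨z, rfl⟩
    have : (Q₂ * Q₂) z = Q₂ z := by rw [h₂id.eq]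
    simpa [ContinuousLinearMap.mul_apply] using this
  have hQP1 : Q₁ * P = P := by
    ext x
    simpa [ContinuousLinearMap.mul_apply] using hfix1 (P x) (hPmem x).1
  have hQP2 : Q₂ * P = P := by
    ext x
    simpa [ContinuousLinearMap.mul_apply] using hfix2 (P x) (hPmem x).2
  have hPP : P * P = P := by
    ext x
    have : (K.orthogonalProjectionOnto (P x) : E) = P x :=
      K.starProjection_eq_self_iff.mpr (hPmem x)
    simpa [ContinuousLinearMap.mul_apply, hPdef, projOf] using this
  have hPQ1 : P * Q₁ = P := by
    have := congrArg star hQP1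
    rwa [star_mul, hPsa.star_eq, h₁sa.star_eq] at this
  have hPQ2 : P * Q₂ = P := by
    have := congrArg star hQP2
    rwa [star_mul, hPsa.star_eq, h₂sa.star_eq] at this
  set Q₁' : E →L[ℂ] E := Q₁ - P with hQ1'
  set Q₂' : E →L[ℂ] E := Q₂ - P with hQ2'
  have h1'sa : IsSelfAdjoint Q₁' := h₁sa.sub hPsa
  have h2'sa : IsSelfAdjoint Q₂' := h₂sa.sub hPsa
  have h1'id : Q₁' * Q₁' = Q₁' := by
    rw [hQ1', mul_sub, sub_mul, sub_mul, h₁id.eq, hQP1, hPQ1, hPP]; abel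
  have h2'id : Q₂' * Q₂' = Q₂' := by
    rw [hQ2', mul_sub, sub_mul, sub_mul, h₂id.eq, hQP2, hPQ2, hPP]; abel
  have hEop : Q₁' * Q₂' = Q₁ * Q₂ - P := by
    rw [hQ1', hQ2', mul_sub, sub_mul, sub_mul, hQP1, hPQ2, hPP]; abel
  set ε : ℝ := ‖Q₁ * Q₂ - P‖ with hε
  have hε0 : 0 ≤ ε := norm_nonneg _
  -- inner product moves for self-adjoint operators
  have inn : ∀ (T : E →L[ℂ] E), IsSelfAdjoint T → ∀ a b : E, ⟪T a, b⟫_ℂ = ⟪a, T b⟫_ℂ := by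
    intro T hT a b
    nth_rw 1 [← hT.adjoint_eq]
    exact ContinuousLinearMap.adjoint_inner_left T b a
  -- self-adjointness of the whole expression
  have hsa : IsSelfAdjoint (Q₁ * Q₂ + Q₂ * Q₁ + ε • (Q₁ + Q₂)) := by
    refine IsSelfAdjoint.add ?_ (IsSelfAdjoint.smul (star_trivial ε) (h₁sa.add h₂sa))
    rw [IsSelfAdjoint, star_add, star_mul, star_mul, h₁sa.star_eq, h₂sa.star_eq, add_comm]
  refine ⟨ContinuousLinearMap.isSelfAdjoint_iff_isSymmetric.mp hsa, fun x => ?_⟩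
  rw [ContinuousLinearMap.reApplyInnerSelf_apply]
  set u : E := Q₁' x with hu
  set v : E := Q₂' x with hv
  set p : E := P x with hp
  -- orthogonality relations
  have hQ1'P : Q₁' * P = 0 := by rw [hQ1', sub_mul, hQP1, hPP, sub_self]
  have hQ2'P : Q₂' * P = 0 := by rw [hQ2', sub_mul, hQP2, hPP, sub_self]
  have hup : ⟪u, p⟫_ℂ = 0 := by
    calc ⟪u, p⟫_ℂ = ⟪Q₁' x, P x⟫_ℂ := rfl
      _ = ⟪x, Q₁' (P x)⟫_ℂ := inn Q₁' h1'sa x (P x)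
      _ = ⟪x, (Q₁' * P) x⟫_ℂ := rfl
      _ = 0 := by rw [hQ1'P]; simp
  have hvp : ⟪v, p⟫_ℂ = 0 := by
    calc ⟪v, p⟫_ℂ = ⟪Q₂' x, P x⟫_ℂ := rfl
      _ = ⟪x, Q₂' (P x)⟫_ℂ := inn Q₂' h2'sa x (P x)
      _ = ⟪x, (Q₂' * P) x⟫_ℂ := rfl
      _ = 0 := by rw [hQ2'P]; simp
  have hpu : ⟪p, u⟫_ℂ = 0 := by
    rw [← inner_conj_symm, hup, map_zero]
  have hpv : ⟪p, v⟫_ℂ = 0 := by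
    rw [← inner_conj_symm, hvp, map_zero]
  have hQ1x : Q₁ x = u + p := by simp [hu, hp, hQ1']
  have hQ2x : Q₂ x = v + p := by simp [hv, hp, hQ2']
  -- the key term
  have hvu : ⟪v, u⟫_ℂ = ⟪(Q₁ * Q₂ - P) v, u⟫_ℂ := by
    have h1 : Q₂' v = v := by
      rw [hv, ← ContinuousLinearMap.mul_apply, h2'id]
    have h2 : Q₁' u = u := by
      rw [hu, ← ContinuousLinearMap.mul_apply, h1'id]
    calc ⟪v, u⟫_ℂ = ⟪Q₂' v, Q₁' u⟫_ℂ := by rw [h1, h2]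
      _ = ⟪Q₁' (Q₂' v), u⟫_ℂ := by rw [inn Q₁' h1'sa]
      _ = ⟪(Q₁ * Q₂ - P) v, u⟫_ℂ := by rw [← ContinuousLinearMap.mul_apply, hEop]
  have hkey : -(ε * ‖v‖ * ‖u‖) ≤ (⟪v, u⟫_ℂ).re := by
    have h1 : ‖⟪(Q₁ * Q₂ - P) v, u⟫_ℂ‖ ≤ ε * ‖v‖ * ‖u‖ := by
      calc ‖⟪(Q₁ * Q₂ - P) v, u⟫_ℂ‖ ≤ ‖(Q₁ * Q₂ - P) v‖ * ‖u‖ := norm_inner_le_norm _ _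
        _ ≤ ε * ‖v‖ * ‖u‖ := by
            rw [mul_assoc]
            exact mul_le_mul_of_nonneg_right ((Q₁ * Q₂ - P).le_opNorm v)
              (norm_nonneg _) |>.trans_eq (by rw [mul_assoc])
    have h2 : |(⟪(Q₁ * Q₂ - P) v, u⟫_ℂ).re| ≤ ‖⟪(Q₁ * Q₂ - P) v, u⟫_ℂ‖ :=
      Complex.abs_re_le_norm _
    rw [hvu]
    have h3 := neg_abs_le ((⟪(Q₁ * Q₂ - P) v, u⟫_ℂ).re)
    linarith
  -- norms
  have hupuq : ⟪u + p, u + p⟫_ℂ = ((‖u‖ ^ 2 + ‖p‖ ^ 2 : ℝ) : ℂ) := by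
    rw [inner_add_add_self, hup, hpu, inner_self_eq_norm_sq_to_K, inner_self_eq_norm_sq_to_K]
    simp [RCLike.ofReal_alg]
  have hvpvq : ⟪v + p, v + p⟫_ℂ = ((‖v‖ ^ 2 + ‖p‖ ^ 2 : ℝ) : ℂ) := by
    rw [inner_add_add_self, hvp, hpv, inner_self_eq_norm_sq_to_K, inner_self_eq_norm_sq_to_K]
    simp [RCLike.ofReal_alg]
  have hnorm1 : (⟪Q₁ x, x⟫_ℂ).re = ‖u‖ ^ 2 + ‖p‖ ^ 2 := by
    have e1 : ⟪Q₁ x, x⟫_ℂ = ⟪Q₁ x, Q₁ x⟫_ℂ := by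
      conv_lhs => rw [← hfix1 (Q₁ x) ⟨x, rfl⟩]
      exact inn Q₁ h₁sa (Q₁ x) x
    rw [e1, hQ1x, hupuq, Complex.ofReal_re]
  have hnorm2 : (⟪Q₂ x, x⟫_ℂ).re = ‖v‖ ^ 2 + ‖p‖ ^ 2 := by
    have e1 : ⟪Q₂ x, x⟫_ℂ = ⟪Q₂ x, Q₂ x⟫_ℂ := by
      conv_lhs => rw [← hfix2 (Q₂ x) ⟨x, rfl⟩]
      exact inn Q₂ h₂sa (Q₂ x) x
    rw [e1, hQ2x, hvpvq, Complex.ofReal_re]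
  -- the anticommutator term
  have hanti : (⟪(Q₁ * Q₂ + Q₂ * Q₁) x, x⟫_ℂ).re = 2 * ((⟪v, u⟫_ℂ).re + ‖p‖ ^ 2) := by
    have e1 : ⟪(Q₁ * Q₂) x, x⟫_ℂ = ⟪Q₂ x, Q₁ x⟫_ℂ := by
      rw [ContinuousLinearMap.mul_apply]; exact inn Q₁ h₁sa (Q₂ x) x
    have e2 : ⟪(Q₂ * Q₁) x, x⟫_ℂ = ⟪Q₁ x, Q₂ x⟫_ℂ := by
      rw [ContinuousLinearMap.mul_apply]; exact inn Q₂ h₂sa (Q₁ x) x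
    have e3 : ⟪Q₁ x, Q₂ x⟫_ℂ = starRingEnd ℂ ⟪Q₂ x, Q₁ x⟫_ℂ := (inner_conj_symm _ _).symm
    have e4 : ⟪Q₂ x, Q₁ x⟫_ℂ = ⟪v, u⟫_ℂ + (‖p‖ : ℂ) ^ 2 := by
      rw [hQ1x, hQ2x, inner_add_left, inner_add_right, inner_add_right, hvp, hpu,
        inner_self_eq_norm_sq_to_K]
      simp [RCLike.ofReal_alg]
    rw [ContinuousLinearMap.add_apply, inner_add_left, e1, e2, e3]
    rw [Complex.add_re, Complex.conj_re, e4]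
    simp only [Complex.add_re, ← Complex.ofReal_pow, Complex.ofReal_re]
    ring
  -- put it all together
  have expand : (⟪(Q₁ * Q₂ + Q₂ * Q₁ + ε • (Q₁ + Q₂)) x, x⟫_ℂ).re
      = (⟪(Q₁ * Q₂ + Q₂ * Q₁) x, x⟫_ℂ).re + ε * ((⟪Q₁ x, x⟫_ℂ).re + (⟪Q₂ x, x⟫_ℂ).re) := by
    simp only [ContinuousLinearMap.add_apply, ContinuousLinearMap.smul_apply, inner_add_left]
    rw [RCLike.real_smul_eq_coe_smul (K := ℂ), inner_smul_real_left]
    simp only [inner_add_left, Complex.add_re, Complex.real_smul, Complex.re_ofReal_mul]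
    try ring
  show (0:ℝ) ≤ (⟪(Q₁ * Q₂ + Q₂ * Q₁ + ε • (Q₁ + Q₂)) x, x⟫_ℂ).re
  rw [expand, hanti, hnorm1, hnorm2]
  nlinarith [hkey, sq_nonneg (‖u‖ - ‖v‖), norm_nonneg p, sq_nonneg (‖p‖), hε0,
    mul_nonneg hε0 (sq_nonneg (‖u‖ - ‖v‖))]
end

section
/- Von Neumann's alternating projection theorem: for two orthogonal projections Q₁, Q₂ on a finite-dimensional complex Hilbert space, the sequence (Q₁Q₂)ⁿ converges to Q₁∧Q₂, the orthogonal projection onto range(Q₁) ∩ range(Q₂). -/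
open scoped InnerProductSpace

section aux

variable {E : Type*} [NormedAddCommGroup E] [InnerProductSpace ℂ E]
    [FiniteDimensional ℂ E]

lemma aux_idem_apply (Q : E →L[ℂ] E) (hid : IsIdempotentElem Q) (x : E) :
    Q (Q x) = Q x := by
  conv_rhs => rw [← hid.eq]
  rfl

lemma aux_mem_range_fixed (Q : E →L[ℂ] E) (hid : IsIdempotentElem Q) {x : E}
    (hx : x ∈ LinearMap.range (Q : E →ₗ[ℂ] E)) : Q x = x := by
  obtain ⟨y, rfl⟩ := hx
  exact aux_idem_apply Q hid y

lemma aux_inner_proj (Q : E →L[ℂ] E) (hsa : IsSelfAdjoint Q) (hid : IsIdempotentElem Q)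
    (x : E) : ⟪Q x, x - Q x⟫_ℂ = 0 := by
  have h1 : ⟪Q x, x - Q x⟫_ℂ = ⟪x, Q (x - Q x)⟫_ℂ := by
    rw [← ContinuousLinearMap.adjoint_inner_left Q (x - Q x) x, hsa.adjoint_eq]
  rw [h1, map_sub, aux_idem_apply Q hid, sub_self, inner_zero_right]

lemma aux_norm_sq (Q : E →L[ℂ] E) (hsa : IsSelfAdjoint Q) (hid : IsIdempotentElem Q)
    (x : E) : ‖x‖ ^ 2 = ‖Q x‖ ^ 2 + ‖x - Q x‖ ^ 2 := by
  have h := norm_add_sq (𝕜 := ℂ) (Q x) (x - Q x)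
  rw [aux_inner_proj Q hsa hid x] at h
  simpa [add_sub_cancel] using h

lemma aux_norm_le (Q : E →L[ℂ] E) (hsa : IsSelfAdjoint Q) (hid : IsIdempotentElem Q)
    (x : E) : ‖Q x‖ ≤ ‖x‖ := by
  have h := aux_norm_sq Q hsa hid x
  nlinarith [norm_nonneg (Q x), norm_nonneg x, sq_nonneg (‖x - Q x‖)]

lemma aux_norm_eq (Q : E →L[ℂ] E) (hsa : IsSelfAdjoint Q) (hid : IsIdempotentElem Q)
    {x : E} (hx : ‖Q x‖ = ‖x‖) : Q x = x := by
  have h := aux_norm_sq Q hsa hid x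
  rw [← hx] at h
  have : ‖x - Q x‖ = 0 := by nlinarith [norm_nonneg (x - Q x)]
  have := norm_eq_zero.mp this
  linear_combination (norm := abel) -this

end aux

/-- Von Neumann's alternating projection theorem: `(Q₁Q₂)ⁿ → Q₁∧Q₂`. -/
theorem stmt2 {E : Type*} [NormedAddCommGroup E] [InnerProductSpace ℂ E]
    [FiniteDimensional ℂ E] (Q₁ Q₂ : E →L[ℂ] E)
    (h₁sa : IsSelfAdjoint Q₁) (h₁id : IsIdempotentElem Q₁)
    (h₂sa : IsSelfAdjoint Q₂) (h₂id : IsIdempotentElem Q₂) :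
    Filter.Tendsto (fun n : ℕ => (Q₁ * Q₂) ^ n) Filter.atTop
      (nhds (projOf (LinearMap.range (Q₁ : E →ₗ[ℂ] E) ⊓ LinearMap.range (Q₂ : E →ₗ[ℂ] E)))) := by
  set M : Submodule ℂ E := LinearMap.range (Q₁ : E →ₗ[ℂ] E) ⊓ LinearMap.range (Q₂ : E →ₗ[ℂ] E) with hM
  set T : E →L[ℂ] E := Q₁ * Q₂ with hT
  set P : E →L[ℂ] E := projOf M with hP
  -- T fixes M
  have hfixM : ∀ x ∈ M, T x = x := by
    intro x hx
    have h2 : Q₂ x = x := aux_mem_range_fixed Q₂ h₂id hx.2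
    have h1 : Q₁ x = x := aux_mem_range_fixed Q₁ h₁id hx.1
    show Q₁ (Q₂ x) = x
    rw [h2, h1]
  -- T maps Mᗮ to Mᗮ
  have hmapW : ∀ x ∈ Mᗮ, T x ∈ Mᗮ := by
    intro x hx
    intro m hm
    have : ⟪m, T x⟫_ℂ = ⟪(Q₂ * Q₁) m, x⟫_ℂ := by
      show ⟪m, Q₁ (Q₂ x)⟫_ℂ = _
      rw [← ContinuousLinearMap.adjoint_inner_left Q₁, h₁sa.adjoint_eq,
        ← ContinuousLinearMap.adjoint_inner_left Q₂, h₂sa.adjoint_eq]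
      rfl
    have hm2 : (Q₂ * Q₁) m = m := by
      show Q₂ (Q₁ m) = m
      rw [aux_mem_range_fixed Q₁ h₁id hm.1, aux_mem_range_fixed Q₂ h₂id hm.2]
    rw [this, hm2]
    exact hx m hm
  -- the contraction constant
  have hcontr : ∃ c : ℝ, 0 ≤ c ∧ c < 1 ∧ ∀ z ∈ Mᗮ, ‖T z‖ ≤ c * ‖z‖ := by
    by_cases hW : ∀ z ∈ Mᗮ, z = 0
    · exact ⟨0, le_refl 0, one_pos, fun z hz => by simp [hW z hz]⟩
    push_neg at hW
    obtain ⟨z₀, hz₀W, hz₀⟩ := hW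
    set K : Set E := Metric.sphere (0 : E) 1 ∩ (Mᗮ : Set E) with hK
    have hKne : K.Nonempty := by
      refine ⟨(‖z₀‖⁻¹ : ℂ) • z₀, ?_, Mᗮ.smul_mem _ hz₀W⟩
      have h0 : ‖z₀‖ ≠ 0 := norm_ne_zero_iff.mpr hz₀
      simp [mem_sphere_iff_norm, norm_smul, h0]
    have hKc : IsCompact K := (isCompact_sphere (0 : E) 1).inter_right
      (Submodule.closed_of_finiteDimensional Mᗮ)
    obtain ⟨x₀, hx₀K, hmax⟩ := hKc.exists_isMaxOn hKne
      (Continuous.continuousOn (by continuity : Continuous fun x => ‖T x‖))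
    set c := ‖T x₀‖ with hc
    have hx₀n : ‖x₀‖ = 1 := by simpa using hx₀K.1
    have hx₀W : x₀ ∈ Mᗮ := hx₀K.2
    have hcle : c ≤ 1 := by
      calc c = ‖Q₁ (Q₂ x₀)‖ := rfl
        _ ≤ ‖Q₂ x₀‖ := aux_norm_le Q₁ h₁sa h₁id _
        _ ≤ ‖x₀‖ := aux_norm_le Q₂ h₂sa h₂id _
        _ = 1 := hx₀n
    have hclt : c < 1 := by
      rcases lt_or_eq_of_le hcle with h | h
      · exact h
      exfalso
      have hq2 : ‖Q₂ x₀‖ = ‖x₀‖ := by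
        have h1 : ‖Q₁ (Q₂ x₀)‖ ≤ ‖Q₂ x₀‖ := aux_norm_le Q₁ h₁sa h₁id _
        have h2 : ‖Q₂ x₀‖ ≤ ‖x₀‖ := aux_norm_le Q₂ h₂sa h₂id _
        have : (1:ℝ) = ‖Q₁ (Q₂ x₀)‖ := h.symm
        rw [hx₀n]
        linarith
      have hq2' : Q₂ x₀ = x₀ := aux_norm_eq Q₂ h₂sa h₂id hq2
      have hq1 : ‖Q₁ x₀‖ = ‖x₀‖ := by
        have hh : ‖Q₁ (Q₂ x₀)‖ = 1 := h
        rw [hq2'] at hh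
        rw [hh, hx₀n]
      have hq1' : Q₁ x₀ = x₀ := aux_norm_eq Q₁ h₁sa h₁id hq1
      have hx₀M : x₀ ∈ M := ⟨⟨x₀, hq1'⟩, ⟨x₀, hq2'⟩⟩
      have hx0 : x₀ = 0 := by
        simpa [inner_self_eq_zero] using (hx₀W x₀ hx₀M)
      rw [hx0, norm_zero] at hx₀n
      exact one_ne_zero hx₀n.symm
    refine ⟨c, norm_nonneg _, hclt, ?_⟩
    intro z hz
    rcases eq_or_ne z 0 with rfl | hzne
    · simp
    have hzn : ‖z‖ ≠ 0 := norm_ne_zero_iff.mpr hzne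
    have hmem : (‖z‖⁻¹ : ℂ) • z ∈ K := by
      refine ⟨?_, Mᗮ.smul_mem _ hz⟩
      simp [mem_sphere_iff_norm, norm_smul, hzn]
    have h2 : ‖T ((‖z‖⁻¹ : ℂ) • z)‖ ≤ c := hmax hmem
    rw [map_smul, norm_smul] at h2
    have hnn : ‖(‖z‖⁻¹ : ℂ)‖ = ‖z‖⁻¹ := by
      simp [norm_inv]
    rw [hnn] at h2
    calc ‖T z‖ = ‖z‖ * (‖z‖⁻¹ * ‖T z‖) := by field_simp
      _ ≤ ‖z‖ * c := mul_le_mul_of_nonneg_left h2 (norm_nonneg z)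
      _ = c * ‖z‖ := mul_comm _ _
  obtain ⟨c, hc0, hc1, hcb⟩ := hcontr
  -- iterate bound on Mᗮ
  have hiter : ∀ n : ℕ, ∀ z ∈ Mᗮ, ‖(T ^ n) z‖ ≤ c ^ n * ‖z‖ := by
    intro n
    induction n with
    | zero => intro z _; simp
    | succ n ih =>
      intro z hz
      have hTz : T z ∈ Mᗮ := hmapW z hz
      have h1 : (T ^ (n+1)) z = (T ^ n) (T z) := by
        rw [pow_succ]
        rfl
      rw [h1]
      calc ‖(T ^ n) (T z)‖ ≤ c ^ n * ‖T z‖ := ih (T z) hTz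
        _ ≤ c ^ n * (c * ‖z‖) := by
            exact mul_le_mul_of_nonneg_left (hcb z hz) (pow_nonneg hc0 n)
        _ = c ^ (n+1) * ‖z‖ := by ring
  -- P properties
  have hPx_mem : ∀ x : E, P x ∈ M := fun x => (M.orthogonalProjectionOnto x).2
  have hsub_mem : ∀ x : E, x - P x ∈ Mᗮ := fun x =>
    M.sub_starProjection_mem_orthogonal x
  have hPnorm : ∀ x : E, ‖x - P x‖ ≤ ‖x‖ := by
    intro x
    have hinner : ⟪P x, x - P x⟫_ℂ = 0 :=
      (hsub_mem x) (P x) (hPx_mem x)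
    have := norm_add_sq (𝕜 := ℂ) (P x) (x - P x)
    rw [hinner] at this
    simp only [add_sub_cancel, map_zero, mul_zero, add_zero] at this
    nlinarith [norm_nonneg (x - P x), norm_nonneg x, sq_nonneg (‖P x‖)]
  -- key bound: ‖T^n - P‖ ≤ c^n
  have hkey : ∀ n : ℕ, ‖T ^ n - P‖ ≤ c ^ n := by
    intro n
    apply ContinuousLinearMap.opNorm_le_bound _ (pow_nonneg hc0 n)
    intro x
    have hfix : (T ^ n) (P x) = P x := by
      induction n with
      | zero => rfl
      | succ n ih =>
        rw [pow_succ]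
        show (T ^ n) (T (P x)) = P x
        rw [hfixM (P x) (hPx_mem x)]
        exact ih
    have hdecomp : (T ^ n - P) x = (T ^ n) (x - P x) := by
      simp only [ContinuousLinearMap.sub_apply, map_sub, hfix]
    rw [hdecomp]
    calc ‖(T ^ n) (x - P x)‖ ≤ c ^ n * ‖x - P x‖ := hiter n _ (hsub_mem x)
      _ ≤ c ^ n * ‖x‖ := mul_le_mul_of_nonneg_left (hPnorm x) (pow_nonneg hc0 n)
  -- conclude
  rw [tendsto_iff_norm_sub_tendsto_zero]
  apply squeeze_zero (fun n => norm_nonneg _) hkey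
  exact tendsto_pow_atTop_nhds_zero_of_lt_one hc0 hc1
end

section
/- (Knabe-type finite-size criterion, operator form) Let P₁,…,P_{L-1} be orthogonal projections on a finite-dimensional Hilbert space such that PⱼP_k = P_kPⱼ whenever |j - k| ≥ 2, and suppose that for each j, (Pⱼ + P_{j+1})² ≥ γ(Pⱼ + P_{j+1}) for some γ with 1/2 < γ ≤ 1. Set H = Σⱼ Pⱼ. Then H² ≥ 2(γ - 1/2)H. -/
open ContinuousLinearMap in
private lemma pos_of_proj' {E : Type*} [NormedAddCommGroup E] [InnerProductSpace ℂ E]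
    [CompleteSpace E] {A : E →L[ℂ] E} (hA : IsSelfAdjoint A) (hI : IsIdempotentElem A) :
    A.IsPositive := by
  refine isPositive_def'.mpr ⟨hA, fun x => ?_⟩
  rw [reApplyInnerSelf_apply]
  have h1 : A x = A (A x) := by
    rw [← ContinuousLinearMap.mul_apply, hI]
  rw [h1]
  have hsym := (isSelfAdjoint_iff_isSymmetric.mp hA)
  have h2 : (inner ℂ (A (A x)) x : ℂ) = inner ℂ (A x) (A x) := hsym (A x) x
  rw [h2]
  simpa using inner_self_nonneg (𝕜 := ℂ) (x := A x)

open ContinuousLinearMap in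
private lemma pos_smul' {E : Type*} [NormedAddCommGroup E] [InnerProductSpace ℂ E]
    [CompleteSpace E] {c : ℝ} (hc : 0 ≤ c) {A : E →L[ℂ] E} (hA : A.IsPositive) : (c • A).IsPositive := by
  have hsa : IsSelfAdjoint (c • A) := by
    rw [IsSelfAdjoint, star_smul, star_trivial, hA.isSelfAdjoint.star_eq]
  refine isPositive_def'.mpr ⟨hsa, fun x => ?_⟩
  rw [reApplyInnerSelf_apply]
  have : (c • A) x = (c : ℂ) • A x := by
    simp [ContinuousLinearMap.smul_apply]
  rw [this, inner_smul_left]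
  simp only [Complex.conj_ofReal, RCLike.re_to_complex, Complex.re_ofReal_mul]
  exact mul_nonneg hc (hA.2 x)

open ContinuousLinearMap in
private lemma pos_sum' {E : Type*} [NormedAddCommGroup E] [InnerProductSpace ℂ E]
    [CompleteSpace E] {ι : Type*} (s : Finset ι) (f : ι → E →L[ℂ] E) (h : ∀ i ∈ s, (f i).IsPositive) :
    (∑ i ∈ s, f i).IsPositive :=
  Finset.sum_induction f _ (fun _ _ ha hb => ha.add hb) isPositive_zero h

set_option maxHeartbeats 1000000 in
set_option synthInstance.maxHeartbeats 400000 in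
/-- Knabe-type finite-size criterion (operator form): if non-adjacent interaction
projections commute and each adjacent pair satisfies `(Pⱼ + Pⱼ₊₁)² ≥ γ(Pⱼ + Pⱼ₊₁)` with
`1/2 < γ ≤ 1`, then `H = Σⱼ Pⱼ` satisfies `H² ≥ 2(γ - 1/2)H`. -/
theorem stmt9 {E : Type*} [NormedAddCommGroup E] [InnerProductSpace ℂ E]
    [FiniteDimensional ℂ E] (L : ℕ) (hL : 4 ≤ L) (P : Fin (L - 1) → E →L[ℂ] E)
    (hproj : ∀ j, IsSelfAdjoint (P j) ∧ IsIdempotentElem (P j))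
    (hcomm : ∀ j k : Fin (L - 1), ((j : ℕ) + 2 ≤ k ∨ (k : ℕ) + 2 ≤ j) →
      P j * P k = P k * P j)
    (γ : ℝ) (hγ₁ : 1 / 2 < γ) (hγ₂ : γ ≤ 1)
    (hgap : ∀ j k : Fin (L - 1), (j : ℕ) + 1 = k →
      ((P j + P k) * (P j + P k) - γ • (P j + P k)).IsPositive) :
    ((∑ j, P j) * (∑ j, P j) - (2 * (γ - 1 / 2)) • ∑ j, P j).IsPositive := by
  classical
  set Q : ℕ → E →L[ℂ] E := fun i => if h : i < (L - 1) then P ⟨i, h⟩ else 0 with hQdef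
  have hQ : ∀ (i : ℕ) (h : i < (L - 1)), Q i = P ⟨i, h⟩ := fun i h => dif_pos h
  have hQproj : ∀ i, IsSelfAdjoint (Q i) ∧ IsIdempotentElem (Q i) := by
    intro i
    by_cases h : i < (L - 1)
    · rw [hQ i h]; exact hproj _
    · rw [hQdef]; simp only [dif_neg h]
      exact ⟨by simp [IsSelfAdjoint], by simp [IsIdempotentElem]⟩
  set H : E →L[ℂ] E := ∑ j, P j with hHdef
  have hH : H = ∑ i ∈ Finset.range (L - 1), Q i := by
    rw [hHdef, ← Fin.sum_univ_eq_sum_range]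
    refine Finset.sum_congr rfl fun j _ => ?_
    rw [hQ _ j.isLt]
  -- sums
  set S : Finset (ℕ × ℕ) := Finset.range (L - 1) ×ˢ Finset.range (L - 1) with hS
  set Far : Finset (ℕ × ℕ) := S.filter (fun p => p.1 + 2 ≤ p.2 ∨ p.2 + 2 ≤ p.1) with hFar
  set R : E →L[ℂ] E := ∑ p ∈ Far, Q p.1 * Q p.2 with hR
  set A : E →L[ℂ] E := ∑ j ∈ Finset.range ((L - 1) - 1), (Q j * Q (j + 1) + Q (j + 1) * Q j)
    with hA
  set G : E →L[ℂ] E := ∑ j ∈ Finset.range ((L - 1) - 1),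
      ((Q j + Q (j + 1)) * (Q j + Q (j + 1)) - γ • (Q j + Q (j + 1))) with hG
  -- H * H decomposition
  have hHH : H * H = H + A + R := by
    rw [hH, Finset.sum_mul_sum, ← Finset.sum_product' (s := Finset.range (L - 1))
      (t := Finset.range (L - 1)) (f := fun i j => Q i * Q j), ← hS]
    rw [← Finset.sum_filter_add_sum_filter_not S (fun p => p.1 = p.2)
      (fun p => Q p.1 * Q p.2)]
    have hdiag : ∑ p ∈ S.filter (fun p => p.1 = p.2), Q p.1 * Q p.2 = H := by
      rw [hH]
      refine Finset.sum_nbij' (fun p => p.1) (fun j => (j, j)) ?_ ?_ ?_ ?_ ?_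
      · intro p hp
        simp only [hS, Finset.mem_filter, Finset.mem_product, Finset.mem_range] at hp
        simpa using hp.1.1
      · intro j hj
        simp only [Finset.mem_range] at hj
        simp [hS, Finset.mem_filter, Finset.mem_product, hj]
      · intro p hp
        simp only [hS, Finset.mem_filter] at hp
        exact Prod.ext rfl hp.2
      · intro j _; rfl
      · intro p hp
        simp only [hS, Finset.mem_filter] at hp
        rw [← hp.2, (hQproj p.1).2]
    have hrest : ∑ p ∈ S.filter (fun p => ¬ p.1 = p.2), Q p.1 * Q p.2 = A + R := by
      rw [← Finset.sum_filter_add_sum_filter_not (S.filter (fun p => ¬ p.1 = p.2))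
        (fun p => p.1 + 1 = p.2) (fun p => Q p.1 * Q p.2), Finset.filter_filter,
        Finset.filter_filter]
      rw [← Finset.sum_filter_add_sum_filter_not
        (S.filter fun p => ¬ p.1 = p.2 ∧ ¬ p.1 + 1 = p.2)
        (fun p => p.2 + 1 = p.1) (fun p => Q p.1 * Q p.2), Finset.filter_filter,
        Finset.filter_filter]
      have h1 : ∑ p ∈ S.filter (fun p => ¬ p.1 = p.2 ∧ p.1 + 1 = p.2), Q p.1 * Q p.2
          = ∑ j ∈ Finset.range ((L - 1) - 1), Q j * Q (j + 1) := by
        refine Finset.sum_nbij' (fun p => p.1) (fun j => (j, j + 1)) ?_ ?_ ?_ ?_ ?_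
        · intro p hp
          simp only [hS, Finset.mem_filter, Finset.mem_product, Finset.mem_range] at hp ⊢
          omega
        · intro j hj
          simp only [Finset.mem_range] at hj
          simp [hS, Finset.mem_filter, Finset.mem_product, Finset.mem_range]
          omega
        · intro p hp
          simp only [hS, Finset.mem_filter] at hp
          exact Prod.ext rfl hp.2.2
        · intro j _; rfl
        · intro p hp
          simp only [hS, Finset.mem_filter] at hp
          rw [← hp.2.2]
      have h2 : ∑ p ∈ S.filter (fun p => (¬ p.1 = p.2 ∧ ¬ p.1 + 1 = p.2) ∧ p.2 + 1 = p.1),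
            Q p.1 * Q p.2 = ∑ j ∈ Finset.range ((L - 1) - 1), Q (j + 1) * Q j := by
        refine Finset.sum_nbij' (fun p => p.2) (fun j => (j + 1, j)) ?_ ?_ ?_ ?_ ?_
        · intro p hp
          simp only [hS, Finset.mem_filter, Finset.mem_product, Finset.mem_range] at hp ⊢
          omega
        · intro j hj
          simp only [Finset.mem_range] at hj
          simp [hS, Finset.mem_filter, Finset.mem_product, Finset.mem_range]
          omega
        · intro p hp
          simp only [hS, Finset.mem_filter] at hp
          exact Prod.ext hp.2.2 rfl
        · intro j _; rfl
        · intro p hp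
          simp only [hS, Finset.mem_filter] at hp
          rw [← hp.2.2]
      have h3 : S.filter (fun p => (¬ p.1 = p.2 ∧ ¬ p.1 + 1 = p.2) ∧ ¬ p.2 + 1 = p.1)
          = Far := by
        rw [hFar]
        ext p
        simp only [Finset.mem_filter, Finset.mem_product, Finset.mem_range, hS]
        constructor
        · rintro ⟨hm, h⟩; exact ⟨hm, by omega⟩
        · rintro ⟨hm, h⟩; exact ⟨hm, by omega⟩
      rw [h1, h2, h3, hA, hR, Finset.sum_add_distrib]
      abel
    rw [hdiag, hrest, hH]
    abel
  -- gap sum decomposition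
  have hGsum : G = A + (1 - γ) • ((H - Q ((L - 1) - 1)) + (H - Q 0)) := by
    have hterm : ∀ j, (Q j + Q (j + 1)) * (Q j + Q (j + 1)) - γ • (Q j + Q (j + 1))
        = (Q j * Q (j + 1) + Q (j + 1) * Q j) + (1 - γ) • (Q j + Q (j + 1)) := by
      intro j
      have e1 : (Q j + Q (j + 1)) * (Q j + Q (j + 1))
          = Q j * Q j + (Q j * Q (j + 1) + Q (j + 1) * Q j) + Q (j + 1) * Q (j + 1) := by
        rw [add_mul, mul_add, mul_add]; abel
      rw [e1, (hQproj j).2, (hQproj (j + 1)).2]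
      module
    have hnn : ((L - 1) - 1) + 1 = L - 1 := by omega
    have hsum1 : ∑ j ∈ Finset.range ((L - 1) - 1), Q j = H - Q ((L - 1) - 1) := by
      have hs := Finset.sum_range_succ Q ((L - 1) - 1)
      rw [hnn] at hs
      rw [hH, hs]
      abel
    have hsum2 : ∑ j ∈ Finset.range ((L - 1) - 1), Q (j + 1) = H - Q 0 := by
      have hs := Finset.sum_range_succ' Q ((L - 1) - 1)
      rw [hnn] at hs
      rw [hH, hs]
      abel
    rw [hG]
    calc ∑ j ∈ Finset.range ((L - 1) - 1),
          ((Q j + Q (j + 1)) * (Q j + Q (j + 1)) - γ • (Q j + Q (j + 1)))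
        = ∑ j ∈ Finset.range ((L - 1) - 1),
          ((Q j * Q (j + 1) + Q (j + 1) * Q j) + (1 - γ) • (Q j + Q (j + 1))) :=
          Finset.sum_congr rfl fun j _ => hterm j
      _ = A + (1 - γ) • (∑ j ∈ Finset.range ((L - 1) - 1), Q j
            + ∑ j ∈ Finset.range ((L - 1) - 1), Q (j + 1)) := by
          rw [Finset.sum_add_distrib, hA, ← Finset.smul_sum]
          congr 1
          exact congrArg _ Finset.sum_add_distrib
      _ = A + (1 - γ) • ((H - Q ((L - 1) - 1)) + (H - Q 0)) := by rw [hsum1, hsum2]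
  -- key identity
  have key : H * H - (2 * (γ - 1 / 2)) • H
      = G + R + ((1 - γ) • Q 0 + (1 - γ) • Q ((L - 1) - 1)) := by
    rw [hHH, hGsum]
    module
  have hgoal : ((∑ j, P j) * (∑ j, P j) - (2 * (γ - 1 / 2)) • ∑ j, P j)
      = G + R + ((1 - γ) • Q 0 + (1 - γ) • Q ((L - 1) - 1)) := key
  rw [hgoal]
  have hQpos : ∀ i, (Q i).IsPositive := fun i => pos_of_proj' (hQproj i).1 (hQproj i).2
  have h1γ : (0 : ℝ) ≤ 1 - γ := by linarith
  refine ContinuousLinearMap.IsPositive.add (ContinuousLinearMap.IsPositive.add ?_ ?_)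
    ((pos_smul' h1γ (hQpos 0)).add (pos_smul' h1γ (hQpos ((L - 1) - 1))))
  · -- G positive
    refine pos_sum' _ _ fun j hj => ?_
    simp only [Finset.mem_range] at hj
    have hj1 : j < (L - 1) := by omega
    have hj2 : j + 1 < (L - 1) := by omega
    rw [hQ j hj1, hQ (j + 1) hj2]
    exact hgap ⟨j, hj1⟩ ⟨j + 1, hj2⟩ rfl
  · -- R positive
    refine pos_sum' _ _ fun p hp => ?_
    simp only [hFar, hS, Finset.mem_filter, Finset.mem_product, Finset.mem_range] at hp
    obtain ⟨⟨hp1, hp2⟩, hfar⟩ := hp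
    rw [hQ p.1 hp1, hQ p.2 hp2]
    set a : Fin (L - 1) := ⟨p.1, hp1⟩
    set b : Fin (L - 1) := ⟨p.2, hp2⟩
    have hc : P a * P b = P b * P a := hcomm a b (by simpa using hfar)
    have hsa : IsSelfAdjoint (P a * P b) := by
      rw [IsSelfAdjoint, star_mul, (hproj a).1.star_eq, (hproj b).1.star_eq, ← hc]
    have hid : IsIdempotentElem (P a * P b) := by
      rw [IsIdempotentElem]
      calc P a * P b * (P a * P b) = P a * (P b * P a) * P b := by noncomm_ring
        _ = P a * (P a * P b) * P b := by rw [hc]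
        _ = (P a * P a) * (P b * P b) := by noncomm_ring
        _ = P a * P b := by rw [(hproj a).2, (hproj b).2]
    exact pos_of_proj' hsa hid
end

section
/- The normalized surface (Haar) measure of a spherical cap of angular radius δ ∈ (0, 1/4) on the unit sphere Sⁿ ⊂ ℝ^{n+1} is strictly greater than (1/(2√π)) · (δ/2)ⁿ / √n. -/
set_option maxHeartbeats 1000000

open Real MeasureTheory Metric
open scoped RealInnerProductSpace ENNReal Classical



theorem myArccosLt (t δ : ℝ) (h1 : Real.cos δ < t) (h2 : 0 < δ) (h3 : δ < π) : Real.arccos t < δ := by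
  rcases le_or_gt 1 t with h | h
  · rw [Real.arccos_eq_zero.2 h]; exact h2
  · by_contra hc
    push_neg at hc
    have h4 : -1 ≤ t := le_trans (Real.neg_one_le_cos δ) h1.le
    have h5 : Real.cos (Real.arccos t) ≤ Real.cos δ := by
      apply Real.cos_le_cos_of_nonneg_of_le_pi h2.le
      · exact Real.arccos_le_pi t
      · exact hc
    rw [Real.cos_arccos h4 h.le] at h5
    linarith

variable {n : ℕ}

local notation "E" => EuclideanSpace ℝ (Fin (n + 1))
local notation "S" => Metric.sphere (0 : EuclideanSpace ℝ (Fin (n + 1))) 1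

noncomputable def sphMap (n : ℕ) (g : EuclideanSpace ℝ (Fin (n + 1)) ≃ₗᵢ[ℝ] EuclideanSpace ℝ (Fin (n + 1))) :
    Metric.sphere (0 : EuclideanSpace ℝ (Fin (n + 1))) 1 → Metric.sphere (0 : EuclideanSpace ℝ (Fin (n + 1))) 1 :=
  fun x => ⟨g x, by
    have := x.2
    simp only [mem_sphere_zero_iff_norm, sub_zero] at this ⊢
    rw [g.norm_map]; exact this⟩

theorem sphMap_continuous (g : EuclideanSpace ℝ (Fin (n+1)) ≃ₗᵢ[ℝ] EuclideanSpace ℝ (Fin (n+1))) :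
    Continuous (sphMap n g) :=
  Continuous.subtype_mk (g.continuous.comp continuous_subtype_val) _

noncomputable def sphProj (n : ℕ) (x : EuclideanSpace ℝ (Fin (n + 1))) :
    Metric.sphere (0 : EuclideanSpace ℝ (Fin (n + 1))) 1 :=
  if h : x = (0 : EuclideanSpace ℝ (Fin (n+1))) then ⟨EuclideanSpace.single 0 1, by simp⟩
  else ⟨‖x‖⁻¹ • x, by
    simp only [mem_sphere_zero_iff_norm, sub_zero, norm_smul, norm_inv, norm_norm]
    exact inv_mul_cancel₀ (norm_ne_zero_iff.2 h)⟩

theorem sphProj_measurable : Measurable (sphProj n) := by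
  have h1 : MeasurableSet (Metric.sphere (0 : EuclideanSpace ℝ (Fin (n+1))) 1) :=
    (isClosed_sphere).measurableSet
  rw [← (MeasurableEmbedding.subtype_coe h1).measurable_comp_iff]
  have : (Subtype.val ∘ sphProj n) = fun x : EuclideanSpace ℝ (Fin (n+1)) =>
      if x = 0 then (EuclideanSpace.single 0 1 : EuclideanSpace ℝ (Fin (n+1))) else ‖x‖⁻¹ • x := by
    funext x
    by_cases h : x = 0 <;> simp [sphProj, h]
  rw [this]
  apply Measurable.ite (MeasurableSet.singleton 0) measurable_const
  exact (measurable_norm.inv).smul measurable_id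

noncomputable def nuSph (n : ℕ) : Measure (Metric.sphere (0 : EuclideanSpace ℝ (Fin (n + 1))) 1) :=
  (volume (Metric.ball (0 : EuclideanSpace ℝ (Fin (n+1))) 1))⁻¹ •
    Measure.map (sphProj n) (volume.restrict (Metric.ball (0 : EuclideanSpace ℝ (Fin (n+1))) 1))

theorem ball_vol_pos : 0 < volume (Metric.ball (0 : EuclideanSpace ℝ (Fin (n+1))) 1) :=
  measure_ball_pos _ _ one_pos

theorem ball_vol_ne_top : volume (Metric.ball (0 : EuclideanSpace ℝ (Fin (n+1))) 1) ≠ ⊤ :=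
  (measure_ball_lt_top).ne

instance : IsProbabilityMeasure (nuSph n) := by
  constructor
  rw [nuSph, Measure.smul_apply, Measure.map_apply sphProj_measurable MeasurableSet.univ]
  simp only [Set.preimage_univ, Measure.restrict_apply MeasurableSet.univ, Set.univ_inter]
  rw [smul_eq_mul, ENNReal.inv_mul_cancel ball_vol_pos.ne' ball_vol_ne_top]

theorem nuSph_inv (g : EuclideanSpace ℝ (Fin (n+1)) ≃ₗᵢ[ℝ] EuclideanSpace ℝ (Fin (n+1))) :
    Measure.map (sphMap n g) (nuSph n) = nuSph n := by
  have hb : MeasurableSet (Metric.ball (0 : EuclideanSpace ℝ (Fin (n+1))) 1) := measurableSet_ball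
  rw [nuSph, Measure.map_smul, Measure.map_map ((sphMap_continuous g).measurable) sphProj_measurable]
  congr 1
  have hae : (sphMap n g) ∘ (sphProj n) =ᵐ[volume.restrict (Metric.ball (0 : EuclideanSpace ℝ (Fin (n+1))) 1)]
      (sphProj n) ∘ g := by
    have h0 : (volume.restrict (Metric.ball (0 : EuclideanSpace ℝ (Fin (n+1))) 1)) {(0 : EuclideanSpace ℝ (Fin (n+1)))} = 0 := by
      apply le_antisymm _ zero_le
      refine le_trans (Measure.restrict_le_self _) ?_
      simp [measure_singleton]
    rw [Filter.EventuallyEq]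
    rw [MeasureTheory.ae_iff]
    apply measure_mono_null _ h0
    intro x hx
    simp only [Function.comp_apply, Set.mem_setOf_eq] at hx
    simp only [Set.mem_singleton_iff]
    by_contra hx0
    apply hx
    have hgx : g x ≠ 0 := by
      simp only [ne_eq, g.map_eq_zero_iff]; exact hx0
    simp only [sphMap, sphProj, dif_neg hx0, dif_neg hgx]
    ext : 1
    simp only
    rw [g.map_smul, g.norm_map]
  rw [Measure.map_congr hae, ← Measure.map_map sphProj_measurable g.continuous.measurable]
  congr 1
  have : g ⁻¹' (Metric.ball (0 : EuclideanSpace ℝ (Fin (n+1))) 1) = Metric.ball 0 1 := by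
    ext x
    simp [mem_ball_iff_norm, g.norm_map]
  calc Measure.map g (volume.restrict (Metric.ball (0:EuclideanSpace ℝ (Fin (n+1))) 1))
      = Measure.map g (volume.restrict (g ⁻¹' (Metric.ball 0 1))) := by rw [this]
    _ = (Measure.map g volume).restrict (Metric.ball 0 1) := (Measure.restrict_map g.continuous.measurable hb).symm
    _ = volume.restrict (Metric.ball 0 1) := by rw [g.measurePreserving.map_eq]

noncomputable def capSet (n : ℕ) (δ : ℝ) (q : Metric.sphere (0 : EuclideanSpace ℝ (Fin (n + 1))) 1) :
    Set (Metric.sphere (0 : EuclideanSpace ℝ (Fin (n + 1))) 1) :=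
  {x | Real.arccos ⟪(q : EuclideanSpace ℝ (Fin (n+1))), (x : EuclideanSpace ℝ (Fin (n+1)))⟫ < δ}

theorem capSet_meas (δ : ℝ) (q : Metric.sphere (0 : EuclideanSpace ℝ (Fin (n + 1))) 1) :
    MeasurableSet (capSet n δ q) := by
  have : Continuous fun x : Metric.sphere (0 : EuclideanSpace ℝ (Fin (n+1))) 1 =>
      Real.arccos ⟪(q : EuclideanSpace ℝ (Fin (n+1))), (x : EuclideanSpace ℝ (Fin (n+1)))⟫ :=
    Real.continuous_arccos.comp (Continuous.inner continuous_const continuous_subtype_val)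
  exact (isOpen_lt this continuous_const).measurableSet

/-- any measure invariant under all sphere rotations gives equal measure to caps -/
theorem capSet_const (m : Measure (Metric.sphere (0 : EuclideanSpace ℝ (Fin (n + 1))) 1))
    (hm : ∀ g : EuclideanSpace ℝ (Fin (n+1)) ≃ₗᵢ[ℝ] EuclideanSpace ℝ (Fin (n+1)),
      Measure.map (sphMap n g) m = m)
    (δ : ℝ) (q q' : Metric.sphere (0 : EuclideanSpace ℝ (Fin (n + 1))) 1) :
    m (capSet n δ q) = m (capSet n δ q') := by
  have hnorm : ‖(q' : EuclideanSpace ℝ (Fin (n+1)))‖ = ‖(q : EuclideanSpace ℝ (Fin (n+1)))‖ := by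
    have h1 := q.2; have h2 := q'.2
    simp only [mem_sphere_zero_iff_norm, sub_zero] at h1 h2
    rw [h1, h2]
  obtain ⟨g, hg⟩ : ∃ g : EuclideanSpace ℝ (Fin (n+1)) ≃ₗᵢ[ℝ] EuclideanSpace ℝ (Fin (n+1)),
      g (q' : EuclideanSpace ℝ (Fin (n+1))) = (q : EuclideanSpace ℝ (Fin (n+1))) :=
    ⟨Submodule.reflection (ℝ ∙ ((q' : EuclideanSpace ℝ (Fin (n+1))) - q))ᗮ, Submodule.reflection_sub hnorm⟩
  have key : (sphMap n g) ⁻¹' (capSet n δ q) = capSet n δ q' := by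
    ext x
    simp only [capSet, Set.mem_preimage, Set.mem_setOf_eq, sphMap]
    rw [← hg, g.inner_map_map]
  rw [← key, ← Measure.map_apply ((sphMap_continuous g).measurable) (capSet_meas δ q), hm g]

/-- Fubini: two invariant measures agree on caps -/
theorem cap_eq_nu (μ : Measure (Metric.sphere (0 : EuclideanSpace ℝ (Fin (n + 1))) 1))
    [IsProbabilityMeasure μ]
    (hm : ∀ g : EuclideanSpace ℝ (Fin (n+1)) ≃ₗᵢ[ℝ] EuclideanSpace ℝ (Fin (n+1)),
      Measure.map (sphMap n g) μ = μ)
    (δ : ℝ) (p : Metric.sphere (0 : EuclideanSpace ℝ (Fin (n + 1))) 1) :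
    μ (capSet n δ p) = nuSph n (capSet n δ p) := by
  set A : Set ((Metric.sphere (0 : EuclideanSpace ℝ (Fin (n+1))) 1) ×
      (Metric.sphere (0 : EuclideanSpace ℝ (Fin (n+1))) 1)) :=
    {z | Real.arccos ⟪(z.1 : EuclideanSpace ℝ (Fin (n+1))), (z.2 : EuclideanSpace ℝ (Fin (n+1)))⟫ < δ} with hA
  have hAmeas : MeasurableSet A := by
    have : Continuous fun z : (Metric.sphere (0 : EuclideanSpace ℝ (Fin (n+1))) 1) ×
        (Metric.sphere (0 : EuclideanSpace ℝ (Fin (n+1))) 1) =>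
        Real.arccos ⟪(z.1 : EuclideanSpace ℝ (Fin (n+1))), (z.2 : EuclideanSpace ℝ (Fin (n+1)))⟫ :=
      Real.continuous_arccos.comp (Continuous.inner
        (continuous_subtype_val.comp continuous_fst) (continuous_subtype_val.comp continuous_snd))
    exact (isOpen_lt this continuous_const).measurableSet
  have h1 : (μ.prod (nuSph n)) A = nuSph n (capSet n δ p) := by
    rw [Measure.prod_apply hAmeas]
    have : ∀ x, nuSph n (Prod.mk x ⁻¹' A) = nuSph n (capSet n δ p) := by
      intro x
      have : Prod.mk x ⁻¹' A = capSet n δ x := rfl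
      rw [this]
      exact capSet_const (nuSph n) nuSph_inv δ x p
    rw [lintegral_congr this, lintegral_const, measure_univ, mul_one]
  have h2 : (μ.prod (nuSph n)) A = μ (capSet n δ p) := by
    rw [Measure.prod_apply_symm hAmeas]
    have : ∀ y, μ ((fun x => (x, y)) ⁻¹' A) = μ (capSet n δ p) := by
      intro y
      have he : (fun x => (x, y)) ⁻¹' A = capSet n δ y := by
        ext x
        simp only [hA, capSet, Set.mem_preimage, Set.mem_setOf_eq]
        rw [real_inner_comm]
      rw [he]
      exact capSet_const μ hm δ y p
    rw [lintegral_congr this, lintegral_const, measure_univ, mul_one]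
  rw [← h2, h1]

noncomputable def coneK (n : ℕ) (δ : ℝ) (p : EuclideanSpace ℝ (Fin (n+1))) : Set (EuclideanSpace ℝ (Fin (n+1))) :=
  {x | ‖x‖ < 1 ∧ ‖x‖ * Real.cos δ < ⟪p, x⟫}

theorem coneK_isOpen (δ : ℝ) (p : EuclideanSpace ℝ (Fin (n+1))) : IsOpen (coneK n δ p) := by
  apply IsOpen.inter
  · exact isOpen_lt continuous_norm continuous_const
  · exact isOpen_lt (continuous_norm.mul continuous_const) (Continuous.inner continuous_const continuous_id)

theorem coneK_subset (δ : ℝ) (hδ₁ : 0 < δ) (hδ₂ : δ < 1/4) (p : Metric.sphere (0 : EuclideanSpace ℝ (Fin (n+1))) 1) :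
    coneK n δ (p : EuclideanSpace ℝ (Fin (n+1))) ⊆
      (sphProj n) ⁻¹' (capSet n δ p) ∩ Metric.ball 0 1 := by
  intro x hx
  obtain ⟨hx1, hx2⟩ := hx
  have hcos : 0 < Real.cos δ := Real.cos_pos_of_mem_Ioo ⟨by linarith [Real.pi_pos], by
    have := Real.pi_gt_three; linarith⟩
  have hx0 : x ≠ 0 := by
    intro h; rw [h] at hx2; simp at hx2
  have hxn : 0 < ‖x‖ := norm_pos_iff.2 hx0
  constructor
  · simp only [Set.mem_preimage, capSet, Set.mem_setOf_eq, sphProj, dif_neg hx0]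
    apply myArccosLt
    · rw [real_inner_smul_right]
      rw [lt_inv_mul_iff₀ hxn]
      exact hx2
    · exact hδ₁
    · have := Real.pi_gt_three; linarith
  · simpa [mem_ball_iff_norm] using hx1

theorem nu_cap_ge (δ : ℝ) (hδ₁ : 0 < δ) (hδ₂ : δ < 1/4) (p : Metric.sphere (0 : EuclideanSpace ℝ (Fin (n+1))) 1) :
    (volume (Metric.ball (0 : EuclideanSpace ℝ (Fin (n+1))) 1))⁻¹ *
      volume (coneK n δ (p : EuclideanSpace ℝ (Fin (n+1)))) ≤ nuSph n (capSet n δ p) := by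
  rw [nuSph, Measure.smul_apply, smul_eq_mul,
    Measure.map_apply sphProj_measurable (capSet_meas δ p),
    Measure.restrict_apply' measurableSet_ball]
  exact mul_le_mul_right (measure_mono (coneK_subset δ hδ₁ hδ₂ p)) _

theorem coneK_vol_eq (δ : ℝ) (p : Metric.sphere (0 : EuclideanSpace ℝ (Fin (n+1))) 1) :
    volume (coneK n δ (p : EuclideanSpace ℝ (Fin (n+1)))) =
      volume (coneK n δ (EuclideanSpace.single (0 : Fin (n+1)) (1:ℝ))) := by
  have hnorm : ‖(EuclideanSpace.single (0 : Fin (n+1)) (1:ℝ))‖ = ‖(p : EuclideanSpace ℝ (Fin (n+1)))‖ := by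
    have h1 := p.2
    simp only [mem_sphere_zero_iff_norm, sub_zero] at h1
    rw [h1, EuclideanSpace.norm_single, norm_one]
  obtain ⟨g, hg⟩ : ∃ g : EuclideanSpace ℝ (Fin (n+1)) ≃ₗᵢ[ℝ] EuclideanSpace ℝ (Fin (n+1)),
      g (EuclideanSpace.single (0 : Fin (n+1)) (1:ℝ)) = (p : EuclideanSpace ℝ (Fin (n+1))) :=
    ⟨Submodule.reflection (ℝ ∙ ((EuclideanSpace.single (0 : Fin (n+1)) (1:ℝ)) - p))ᗮ, Submodule.reflection_sub hnorm⟩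
  have key : g ⁻¹' (coneK n δ (p : EuclideanSpace ℝ (Fin (n+1)))) =
      coneK n δ (EuclideanSpace.single (0 : Fin (n+1)) (1:ℝ)) := by
    ext x
    simp only [coneK, Set.mem_preimage, Set.mem_setOf_eq, g.norm_map]
    rw [← hg, g.inner_map_map]
  rw [← key]
  exact (g.measurePreserving.measure_preimage (coneK_isOpen δ _).measurableSet.nullMeasurableSet).symm


-- slice volume
theorem slice_vol (hn : 1 ≤ n) (r : ℝ) (hr : 0 < r) :
    volume {y : Fin n → ℝ | ∑ i, (y i)^2 < r^2} =
      ENNReal.ofReal r ^ n * ENNReal.ofReal (Real.sqrt π ^ n / Real.Gamma (n/2 + 1)) := by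
  haveI : Nonempty (Fin n) := ⟨⟨0, by omega⟩⟩
  have hE := EuclideanSpace.volume_preserving_symm_measurableEquiv_toLp (Fin n)
  have hopen : IsOpen {y : Fin n → ℝ | ∑ i, (y i)^2 < r^2} := by
    apply isOpen_lt _ continuous_const
    exact continuous_finset_sum _ fun i _ => ((continuous_apply i).pow 2)
  have hpre : (MeasurableEquiv.toLp 2 (Fin n → ℝ)).symm ⁻¹' {y : Fin n → ℝ | ∑ i, (y i)^2 < r^2} =
      Metric.ball (0 : EuclideanSpace ℝ (Fin n)) r := by
    ext x
    simp only [Set.mem_preimage, Set.mem_setOf_eq, mem_ball_iff_norm, sub_zero]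
    rw [EuclideanSpace.norm_eq, Real.sqrt_lt' hr]
    have : ∀ i, ‖x i‖ ^ 2 = (x i) ^ 2 := fun i => by rw [Real.norm_eq_abs, sq_abs]
    simp_rw [this]
    rfl
  rw [← hE.measure_preimage hopen.measurableSet.nullMeasurableSet, hpre,
    EuclideanSpace.volume_ball, Fintype.card_fin]

theorem coneK_vol_ge (hn : 1 ≤ n) (δ : ℝ) (hδ₁ : 0 < δ) (hδ₂ : δ < 1/4) :
    ENNReal.ofReal ((Real.cos δ ^ (n+1) / (n+1)) * (Real.tan δ ^ n *
        (Real.sqrt π ^ n / Real.Gamma (n/2 + 1)))) ≤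
      volume (coneK n δ (EuclideanSpace.single (0 : Fin (n+1)) (1:ℝ))) := by
  rw [coneK]
  have hπ3 := Real.pi_gt_three
  have hc : 0 < Real.cos δ := Real.cos_pos_of_mem_Ioo ⟨by linarith, by linarith⟩
  have hs : 0 < Real.sin δ := Real.sin_pos_of_pos_of_lt_pi hδ₁ (by linarith)
  have htan : 0 < Real.tan δ := by rw [Real.tan_eq_sin_div_cos]; positivity
  set c := Real.cos δ with hcdef
  -- measure preserving equivalence
  set Ψ := (MeasurableEquiv.toLp 2 (Fin (n+1) → ℝ)).symm.trans
    (MeasurableEquiv.piFinSuccAbove (fun _ : Fin (n+1) => ℝ) 0) with hΨdef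
  have hΨ : MeasurePreserving Ψ volume volume :=
    (volume_preserving_piFinSuccAbove (fun _ : Fin (n+1) => ℝ) 0).comp
      (EuclideanSpace.volume_preserving_symm_measurableEquiv_toLp (Fin (n+1)))
  set W : Set (ℝ × (Fin n → ℝ)) :=
    {z | z.1 ∈ Set.Ioo 0 c ∧ ∑ i, (z.2 i)^2 < (z.1 * Real.tan δ)^2} with hWdef
  have hWopen : IsOpen W := by
    apply IsOpen.inter
    · exact (isOpen_Ioo).preimage continuous_fst
    · exact isOpen_lt (f := fun z : ℝ × (Fin n → ℝ) => ∑ i, (z.2 i)^2)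
        (g := fun z : ℝ × (Fin n → ℝ) => (z.1 * Real.tan δ)^2)
        (continuous_finset_sum _ fun i _ => (((continuous_apply i).comp continuous_snd).pow 2))
        ((continuous_fst.mul continuous_const).pow 2)
  -- preimage is inside the cone
  have hsub : Ψ ⁻¹' W ⊆ {x : EuclideanSpace ℝ (Fin (n+1)) | ‖x‖ < 1 ∧
      ‖x‖ * c < ⟪EuclideanSpace.single (0 : Fin (n+1)) (1:ℝ), x⟫} := by
    intro x hx
    simp only [hΨdef, Set.mem_preimage, MeasurableEquiv.trans_apply,
      MeasurableEquiv.piFinSuccAbove_apply, hWdef, Set.mem_setOf_eq] at hx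
    obtain ⟨⟨ht0, htc⟩, hsum⟩ := hx
    replace ht0 : 0 < x 0 := ht0
    replace htc : x 0 < c := htc
    have hxsum : ∑ i : Fin n, (x i.succ)^2 < (x 0 * Real.tan δ)^2 := hsum
    have hnorm2 : ‖x‖^2 = (x 0)^2 + ∑ i : Fin n, (x i.succ)^2 := by
      rw [EuclideanSpace.norm_eq]
      rw [Real.sq_sqrt (by positivity)]
      rw [Fin.sum_univ_succ]
      congr 1
      · rw [Real.norm_eq_abs, sq_abs]
      · exact Finset.sum_congr rfl fun i _ => by rw [Real.norm_eq_abs, sq_abs]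
    have hsin : x 0 * Real.tan δ ≤ Real.sin δ := by
      have : x 0 * Real.tan δ ≤ c * Real.tan δ := by nlinarith
      rwa [mul_comm c, Real.tan_mul_cos hc.ne'] at this
    have h1 : ‖x‖^2 < 1 := by
      have hsc : Real.sin δ ^ 2 + c ^ 2 = 1 := Real.sin_sq_add_cos_sq δ
      nlinarith [sq_nonneg (Real.sin δ - x 0 * Real.tan δ), sq_nonneg (c - x 0), mul_pos ht0 htan]
    have hinner : ⟪EuclideanSpace.single (0 : Fin (n+1)) (1:ℝ), x⟫ = x 0 := by
      rw [EuclideanSpace.inner_single_left]; simp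
    constructor
    · have := abs_nonneg (‖x‖)
      nlinarith [norm_nonneg x]
    · rw [hinner]
      apply lt_of_pow_lt_pow_left₀ 2 ht0.le
      have htc2 : Real.tan δ ^2 * c^2 = Real.sin δ ^2 := by
        have := Real.tan_mul_cos hc.ne'
        nlinarith
      have hsc : Real.sin δ ^ 2 + c ^ 2 = 1 := Real.sin_sq_add_cos_sq δ
      have hn0 : (0:ℝ) ≤ ∑ i : Fin n, (x i.succ)^2 := by positivity
      calc (‖x‖ * c)^2 = ‖x‖^2 * c^2 := by ring
        _ < (x 0)^2 := by nlinarith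
  refine le_trans ?_ (measure_mono hsub)
  rw [hΨ.measure_preimage hWopen.measurableSet.nullMeasurableSet]
  have hWv : volume W = ∫⁻ t in Set.Ioo 0 c,
      volume {y : Fin n → ℝ | ∑ i, (y i)^2 < (t * Real.tan δ)^2} := by
    rw [Measure.volume_eq_prod, Measure.prod_apply hWopen.measurableSet]
    rw [← lintegral_indicator measurableSet_Ioo]
    apply lintegral_congr
    intro t
    by_cases ht : t ∈ Set.Ioo 0 c
    · rw [Set.indicator_of_mem ht]
      congr 1
      ext y
      simp only [hWdef, Set.mem_preimage, Set.mem_setOf_eq, ht, true_and]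
    · rw [Set.indicator_of_notMem ht]
      have he : (Prod.mk t ⁻¹' W) = ∅ := by
        ext y
        simp only [hWdef, Set.mem_preimage, Set.mem_setOf_eq, Set.mem_empty_iff_false, iff_false,
          not_and]
        intro h; exact absurd h ht
      rw [he, measure_empty]
  rw [hWv]
  have hcong : ∫⁻ t in Set.Ioo 0 c, volume {y : Fin n → ℝ | ∑ i, (y i)^2 < (t * Real.tan δ)^2} =
      ∫⁻ t in Set.Ioo 0 c, ENNReal.ofReal (t^n) *
        ENNReal.ofReal (Real.tan δ ^ n * (Real.sqrt π ^ n / Real.Gamma (n/2 + 1))) := by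
    apply setLIntegral_congr_fun measurableSet_Ioo
    intro t ht
    beta_reduce
    rw [slice_vol hn _ (mul_pos ht.1 htan)]
    rw [← ENNReal.ofReal_pow (mul_nonneg ht.1.le htan.le), mul_pow,
      ENNReal.ofReal_mul (pow_nonneg ht.1.le n), ENNReal.ofReal_mul (pow_nonneg htan.le n),
      mul_assoc]
  rw [hcong, lintegral_mul_const _ (Measurable.ennreal_ofReal (measurable_id'.pow_const n))]
  have hval : ∫⁻ t in Set.Ioo (0:ℝ) c, ENNReal.ofReal (t^n) = ENNReal.ofReal (c^(n+1)/(n+1)) := by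
    have hint : IntegrableOn (fun t : ℝ => t^n) (Set.Ioo 0 c) :=
      ((continuous_pow n).integrableOn_Icc).mono_set Set.Ioo_subset_Icc_self
    rw [← MeasureTheory.ofReal_integral_eq_lintegral_ofReal hint
      ((ae_restrict_iff' measurableSet_Ioo).2 (ae_of_all _ fun t ht => pow_nonneg ht.1.le n))]
    congr 1
    rw [← MeasureTheory.integral_Ioc_eq_integral_Ioo, ← intervalIntegral.integral_of_le hc.le,
      integral_pow]
    simp
  rw [hval, ← ENNReal.ofReal_mul (by positivity)]

theorem gamma_ratio (n : ℕ) :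
    Real.sqrt (((n:ℝ)+1)/2) * Real.Gamma ((n:ℝ)/2 + 1) ≤ Real.Gamma (((n:ℝ)+1)/2 + 1) := by
  set a : ℝ := ((n:ℝ)+1)/2 with ha_def
  have ha : 0 < a := by positivity
  have hu : 0 < Real.Gamma a := Real.Gamma_pos_of_pos ha
  have hm : 0 < Real.Gamma (a + 1/2) := Real.Gamma_pos_of_pos (by linarith)
  have hv : 0 < Real.Gamma (a + 1) := Real.Gamma_pos_of_pos (by linarith)
  have hvu : Real.Gamma (a + 1) = a * Real.Gamma a := Real.Gamma_add_one ha.ne'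
  -- log-convexity at midpoint
  have hcx := Real.convexOn_log_Gamma
  have hmid := hcx.2 (Set.mem_Ioi.2 ha) (Set.mem_Ioi.2 (by linarith : (0:ℝ) < a + 1))
    (by norm_num : (0:ℝ) ≤ 1/2) (by norm_num : (0:ℝ) ≤ 1/2) (by norm_num)
  have hmid' : Real.log (Real.Gamma (a + 1/2)) ≤
      (Real.log (Real.Gamma a) + Real.log (Real.Gamma (a+1))) / 2 := by
    have h1 : (1/2 : ℝ) • a + (1/2 : ℝ) • (a + 1) = a + 1/2 := by
      simp [smul_eq_mul]; ring
    rw [h1] at hmid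
    simpa [Function.comp, smul_eq_mul] using le_trans hmid (by simp [smul_eq_mul]; ring_nf; rfl)
  have hsq : Real.Gamma (a + 1/2) ^ 2 ≤ Real.Gamma a * Real.Gamma (a + 1) := by
    have h2 : Real.log (Real.Gamma (a + 1/2) ^ 2) ≤ Real.log (Real.Gamma a * Real.Gamma (a+1)) := by
      rw [Real.log_pow, Real.log_mul hu.ne' hv.ne']
      push_cast
      linarith
    exact (Real.log_le_log_iff (by positivity) (by positivity)).1 h2
  -- conclude
  have key : a * Real.Gamma (a + 1/2) ^ 2 ≤ Real.Gamma (a + 1) ^ 2 := by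
    have : Real.Gamma a = Real.Gamma (a+1) / a := by rw [hvu]; field_simp
    rw [this] at hsq
    rw [div_mul_eq_mul_div, ← sq] at hsq
    calc a * Real.Gamma (a + 1/2) ^ 2 ≤ a * (Real.Gamma (a+1)^2 / a) := by
          apply mul_le_mul_of_nonneg_left hsq ha.le
      _ = Real.Gamma (a+1) ^ 2 := by field_simp
  have h3 : Real.sqrt a * Real.Gamma (a + 1/2) ≤ Real.Gamma (a + 1) := by
    have h4 : (Real.sqrt a * Real.Gamma (a + 1/2))^2 ≤ Real.Gamma (a+1)^2 := by
      rw [mul_pow, Real.sq_sqrt ha.le]; exact key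
    have := Real.sqrt_le_sqrt h4
    rwa [Real.sqrt_sq (by positivity), Real.sqrt_sq hv.le] at this
  have hfix : a + 1/2 = (n:ℝ)/2 + 1 := by rw [ha_def]; ring
  rw [hfix] at h3
  exact h3

theorem core_ineq (n : ℕ) (hn : 1 ≤ n) (δ : ℝ) (hδ₁ : 0 < δ) (hδ₂ : δ < 1/4) :
    (δ/2)^n < Real.sin δ ^ n * Real.cos δ := by
  have hsin : 63/64*δ < Real.sin δ := by
    have h := Real.sin_gt_sub_cube hδ₁
    have hδ2 : δ^2 < 1/16 := by nlinarith
    nlinarith [mul_pos hδ₁ (by nlinarith : (0:ℝ) < 1/16 - δ^2)]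
  have hcos : (31/32 : ℝ) < Real.cos δ := by
    have h := Real.one_sub_sq_div_two_lt_cos (x := δ) (by positivity)
    nlinarith
  have hA : ((δ/2) * (63/32))^n ≤ Real.sin δ ^ n := by
    apply pow_le_pow_left₀ (by positivity)
    nlinarith
  have h63 : (63/32 : ℝ) ≤ (63/32)^n := le_self_pow₀ (by norm_num) (by omega)
  have hB : (0:ℝ) < (δ/2)^n := by positivity
  have hAB : (δ/2)^n * (63/32)^n = ((δ/2) * (63/32))^n := (mul_pow _ _ n).symm
  have hA0 : (0:ℝ) < ((δ/2) * (63/32))^n := by positivity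
  calc (δ/2)^n < (δ/2)^n * ((63/32) * (31/32)) := by nlinarith
    _ ≤ ((δ/2)*(63/32))^n * (31/32) := by nlinarith
    _ < ((δ/2)*(63/32))^n * Real.cos δ := by nlinarith
    _ ≤ Real.sin δ ^ n * Real.cos δ := by nlinarith

theorem numeric_ineq (n : ℕ) (hn : 1 ≤ n) (δ : ℝ) (hδ₁ : 0 < δ) (hδ₂ : δ < 1/4) :
    1 / (2 * Real.sqrt π) * (δ / 2) ^ n / Real.sqrt n <
      (Real.cos δ ^ (n+1) / (n+1)) * (Real.tan δ ^ n * (Real.sqrt π ^ n / Real.Gamma (n/2 + 1))) /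
        (Real.sqrt π ^ (n+1) / Real.Gamma (((n:ℝ)+1)/2 + 1)) := by
  have hπ : 0 < Real.sqrt π := Real.sqrt_pos.2 Real.pi_pos
  have hπ3 := Real.pi_gt_three
  have hc : 0 < Real.cos δ := Real.cos_pos_of_mem_Ioo ⟨by linarith, by linarith⟩
  have hs : 0 < Real.sin δ := Real.sin_pos_of_pos_of_lt_pi hδ₁ (by linarith)
  have hΓ2 : 0 < Real.Gamma ((n:ℝ)/2 + 1) := Real.Gamma_pos_of_pos (by positivity)
  have hΓ3 : 0 < Real.Gamma (((n:ℝ)+1)/2 + 1) := Real.Gamma_pos_of_pos (by positivity)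
  have hn1 : (0:ℝ) < (n:ℝ) + 1 := by positivity
  have hsn : 0 < Real.sqrt n := Real.sqrt_pos.2 (by exact_mod_cast Nat.pos_of_ne_zero (by omega))
  have hs1 : 0 < Real.sqrt ((n:ℝ)+1) := Real.sqrt_pos.2 hn1
  set T := Real.sin δ ^ n * Real.cos δ with hT
  have hT0 : 0 < T := by positivity
  -- rewrite RHS
  have hRHS : (Real.cos δ ^ (n+1) / (n+1)) * (Real.tan δ ^ n * (Real.sqrt π ^ n / Real.Gamma (n/2 + 1))) /
        (Real.sqrt π ^ (n+1) / Real.Gamma (((n:ℝ)+1)/2 + 1)) =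
      T * (Real.Gamma (((n:ℝ)+1)/2 + 1) / Real.Gamma ((n:ℝ)/2 + 1)) / (((n:ℝ)+1) * Real.sqrt π) := by
    rw [hT, Real.tan_eq_sin_div_cos, div_pow, pow_succ, pow_succ]
    field_simp
  rw [hRHS]
  -- gamma ratio bound
  have hg : Real.sqrt (((n:ℝ)+1)/2) ≤ Real.Gamma (((n:ℝ)+1)/2 + 1) / Real.Gamma ((n:ℝ)/2 + 1) :=
    (le_div_iff₀ hΓ2).2 (gamma_ratio n)
  have step1 : T * Real.sqrt (((n:ℝ)+1)/2) / (((n:ℝ)+1) * Real.sqrt π) ≤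
      T * (Real.Gamma (((n:ℝ)+1)/2 + 1) / Real.Gamma ((n:ℝ)/2 + 1)) / (((n:ℝ)+1) * Real.sqrt π) := by
    gcongr
  refine lt_of_lt_of_le ?_ step1
  -- now pure elementary inequality
  have hsqrt2 : Real.sqrt (((n:ℝ)+1)/2) = Real.sqrt ((n:ℝ)+1) / Real.sqrt 2 := by
    rw [Real.sqrt_div hn1.le]
  rw [hsqrt2]
  set s1 := Real.sqrt ((n:ℝ)+1) with hs1def
  have hss1 : s1 * s1 = (n:ℝ)+1 := Real.mul_self_sqrt hn1.le
  have h22 : Real.sqrt 2 * Real.sqrt 2 = 2 := Real.mul_self_sqrt (by norm_num)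
  have h2pos : (0:ℝ) < Real.sqrt 2 := Real.sqrt_pos.2 (by norm_num)
  have key2 : s1 ≤ Real.sqrt 2 * Real.sqrt n := by
    rw [hs1def, ← Real.sqrt_mul (by norm_num : (0:ℝ) ≤ 2)]
    apply Real.sqrt_le_sqrt
    have : (1:ℝ) ≤ (n:ℝ) := by exact_mod_cast hn
    linarith
  have h2coef : 1/(2*Real.sqrt π*Real.sqrt n) ≤ (s1/Real.sqrt 2)/(((n:ℝ)+1)*Real.sqrt π) := by
    rw [div_le_div_iff₀ (by positivity) (by positivity), one_mul, div_mul_eq_mul_div,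
      le_div_iff₀ (by positivity)]
    have hmul := mul_le_mul_of_nonneg_right key2 hs1.le
    have h5 : ((n:ℝ)+1)*(Real.sqrt π*Real.sqrt 2) ≤
        (Real.sqrt 2*Real.sqrt n*s1)*(Real.sqrt π*Real.sqrt 2) := by
      rw [← hss1]
      exact mul_le_mul_of_nonneg_right hmul (by positivity)
    have h6 : (Real.sqrt 2*Real.sqrt n*s1)*(Real.sqrt π*Real.sqrt 2) =
        s1*(2*Real.sqrt π*Real.sqrt n) := by
      linear_combination (Real.sqrt n * s1 * Real.sqrt π) * h22
    linarith
  have hcore := core_ineq n hn δ hδ₁ hδ₂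
  have hL : 1 / (2 * Real.sqrt π) * (δ / 2) ^ n / Real.sqrt n =
      (δ/2)^n * (1/(2*Real.sqrt π*Real.sqrt n)) := by ring
  have hR : T * (s1 / Real.sqrt 2) / (((n:ℝ)+1) * Real.sqrt π) =
      T * ((s1/Real.sqrt 2)/(((n:ℝ)+1)*Real.sqrt π)) := by ring
  rw [hL, hR]
  exact mul_lt_mul hcore h2coef (by positivity) hT0.le

/-- The normalized rotation-invariant (Haar) probability measure of a spherical cap of
angular radius `0 < δ < 1/4` on `Sⁿ ⊂ ℝ^{n+1}` is `> (1/(2√π)) (δ/2)ⁿ / √n`. -/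
theorem stmt13 (n : ℕ) (hn : 1 ≤ n)
    (μ : MeasureTheory.Measure (Metric.sphere (0 : EuclideanSpace ℝ (Fin (n + 1))) 1))
    [MeasureTheory.IsProbabilityMeasure μ]
    (hinv : ∀ g : EuclideanSpace ℝ (Fin (n + 1)) ≃ₗᵢ[ℝ] EuclideanSpace ℝ (Fin (n + 1)),
      MeasureTheory.Measure.map
        (fun x : Metric.sphere (0 : EuclideanSpace ℝ (Fin (n + 1))) 1 =>
          (⟨g x, by
            have := x.2
            simp only [mem_sphere_iff_norm, sub_zero] at this ⊢
            rw [g.norm_map]; exact this⟩ :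
            Metric.sphere (0 : EuclideanSpace ℝ (Fin (n + 1))) 1)) μ = μ)
    (δ : ℝ) (hδ₁ : 0 < δ) (hδ₂ : δ < 1 / 4)
    (p : Metric.sphere (0 : EuclideanSpace ℝ (Fin (n + 1))) 1) :
    1 / (2 * Real.sqrt Real.pi) * (δ / 2) ^ n / Real.sqrt n <
      (μ {x : Metric.sphere (0 : EuclideanSpace ℝ (Fin (n + 1))) 1 |
        Real.arccos ⟪(p : EuclideanSpace ℝ (Fin (n + 1))),
          (x : EuclideanSpace ℝ (Fin (n + 1)))⟫ < δ}).toReal := by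
  have hinv' : ∀ g : EuclideanSpace ℝ (Fin (n + 1)) ≃ₗᵢ[ℝ] EuclideanSpace ℝ (Fin (n + 1)),
      Measure.map (sphMap n g) μ = μ := hinv
  have hgoalset : {x : Metric.sphere (0 : EuclideanSpace ℝ (Fin (n + 1))) 1 |
      Real.arccos ⟪(p : EuclideanSpace ℝ (Fin (n + 1))),
        (x : EuclideanSpace ℝ (Fin (n + 1)))⟫ < δ} = capSet n δ p := rfl
  rw [hgoalset, cap_eq_nu μ hinv' δ p]
  -- abbreviations for the real quantities
  set A : ℝ := (Real.cos δ ^ (n+1) / (n+1)) * (Real.tan δ ^ n *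
      (Real.sqrt Real.pi ^ n / Real.Gamma (n/2 + 1))) with hA
  set B : ℝ := Real.sqrt Real.pi ^ (n+1) / Real.Gamma (((n:ℝ)+1)/2 + 1) with hB
  have hπ3 := Real.pi_gt_three
  have hΓ3 : 0 < Real.Gamma (((n:ℝ)+1)/2 + 1) := Real.Gamma_pos_of_pos (by positivity)
  have hBpos : 0 < B := by rw [hB]; positivity
  have hball : volume (Metric.ball (0 : EuclideanSpace ℝ (Fin (n+1))) 1) = ENNReal.ofReal B := by
    rw [EuclideanSpace.volume_ball, Fintype.card_fin, hB]
    have : ((n+1 : ℕ) : ℝ) = (n : ℝ) + 1 := by push_cast; ring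
    rw [this]
    simp [ENNReal.ofReal_one]
  -- key ENNReal lower bound for the cap
  have hlow : ENNReal.ofReal (A / B) ≤ nuSph n (capSet n δ p) := by
    refine le_trans ?_ (nu_cap_ge δ hδ₁ hδ₂ p)
    rw [hball, coneK_vol_eq δ p]
    have h3 := coneK_vol_ge hn δ hδ₁ hδ₂
    have hA3 : ENNReal.ofReal A ≤
        volume (coneK n δ (EuclideanSpace.single (0 : Fin (n+1)) (1:ℝ))) := by
      exact h3
    calc ENNReal.ofReal (A / B) = ENNReal.ofReal A / ENNReal.ofReal B :=
          ENNReal.ofReal_div_of_pos hBpos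
      _ = (ENNReal.ofReal B)⁻¹ * ENNReal.ofReal A := by
          rw [ENNReal.div_eq_inv_mul]
      _ ≤ (ENNReal.ofReal B)⁻¹ *
          volume (coneK n δ (EuclideanSpace.single (0 : Fin (n+1)) (1:ℝ))) :=
          mul_le_mul_right hA3 _
  have hfin : nuSph n (capSet n δ p) ≠ ⊤ := measure_ne_top _ _
  have hle : A / B ≤ (nuSph n (capSet n δ p)).toReal :=
    (ENNReal.ofReal_le_iff_le_toReal hfin).1 hlow
  refine lt_of_lt_of_le ?_ hle
  have := numeric_ineq n hn δ hδ₁ hδ₂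
  rw [hA, hB]
  exact this
end

section
/- Let v₁,…,v_r be orthonormal vectors and φ₁,…,φ_{i-1} be orthonormal vectors (2 ≤ i ≤ r) in a real inner product space, with ‖φⱼ - vⱼ‖ ≤ η for all 1 ≤ j ≤ i-1. Then for every unit vector u ∈ span{φ₁,…,φ_{i-1}}, one has |⟨u, vᵢ⟩| ≤ η√(i-1). -/
open scoped RealInnerProductSpace

/-- If `v₁,…,v_r` is orthonormal, `φ₁,…,φ_{i-1}` is orthonormal with `‖φⱼ - vⱼ‖ ≤ η`
for `j ≤ i-1` (where `2 ≤ i ≤ r`), then every unit vector `u` in the span of the `φⱼ`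
satisfies `|⟨u, vᵢ⟩| ≤ η √(i-1)`. -/
theorem stmt16 {F : Type*} [NormedAddCommGroup F] [InnerProductSpace ℝ F]
    (r i : ℕ) (hi2 : 2 ≤ i) (hir : i ≤ r)
    (v : Fin r → F) (hv : Orthonormal ℝ v)
    (φ : Fin (i - 1) → F) (hφ : Orthonormal ℝ φ)
    (η : ℝ) (hη : 0 ≤ η)
    (hclose : ∀ j : Fin (i - 1), ‖φ j - v ⟨j.1, by omega⟩‖ ≤ η) :
    ∀ u ∈ Submodule.span ℝ (Set.range φ), ‖u‖ = 1 →
      |⟪u, v ⟨i - 1, by omega⟩⟫| ≤ η * Real.sqrt (i - 1 : ℕ) := by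
  intro u hu hnorm
  obtain ⟨c, rfl⟩ := (Submodule.mem_span_range_iff_exists_fun ℝ).mp hu
  set w : F := v ⟨i - 1, by omega⟩ with hw
  have hwnorm : ‖w‖ = 1 := hv.1 _
  have hbound : ∀ j : Fin (i - 1), |⟪φ j, w⟫| ≤ η := by
    intro j
    have h0 : ⟪v ⟨j.1, by omega⟩, w⟫ = 0 := by
      apply hv.2
      simp only [ne_eq, Fin.mk.injEq]
      omega
    have : ⟪φ j, w⟫ = ⟪φ j - v ⟨j.1, by omega⟩, w⟫ := by
      rw [inner_sub_left, h0, sub_zero]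
    rw [this]
    calc |⟪φ j - v ⟨j.1, by omega⟩, w⟫| ≤ ‖φ j - v ⟨j.1, by omega⟩‖ * ‖w‖ :=
          abs_real_inner_le_norm _ _
      _ ≤ η * 1 := by rw [hwnorm]; exact mul_le_mul_of_nonneg_right (hclose j) zero_le_one
      _ = η := mul_one η
  have hsumsq : ∑ j, (c j) ^ 2 = 1 := by
    have h := hφ.inner_sum c c Finset.univ
    simp only [starRingEnd_apply, star_trivial, ← sq] at h
    rw [← h, real_inner_self_eq_norm_sq, hnorm, one_pow]
  have hexp : ⟪∑ j, c j • φ j, w⟫ = ∑ j, c j * ⟪φ j, w⟫ := by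
    rw [sum_inner]
    simp [real_inner_smul_left]
  rw [hexp]
  have hcs : (∑ j, |c j|) ≤ Real.sqrt (i - 1 : ℕ) := by
    have h1 : (∑ j, |c j|) ^ 2 ≤ (Finset.univ.card : ℝ) * ∑ j : Fin (i-1), |c j| ^ 2 :=
      sq_sum_le_card_mul_sum_sq
    simp only [sq_abs, hsumsq, Finset.card_univ, Fintype.card_fin, mul_one] at h1
    have h2 : 0 ≤ ∑ j, |c j| := Finset.sum_nonneg fun j _ => abs_nonneg _
    calc (∑ j, |c j|) = Real.sqrt ((∑ j, |c j|) ^ 2) := (Real.sqrt_sq h2).symm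
      _ ≤ Real.sqrt (i - 1 : ℕ) := Real.sqrt_le_sqrt h1
  calc |∑ j, c j * ⟪φ j, w⟫| ≤ ∑ j, |c j * ⟪φ j, w⟫| := Finset.abs_sum_le_sum_abs _ _
    _ ≤ ∑ j, |c j| * η := by
        apply Finset.sum_le_sum
        intro j _
        rw [abs_mul]
        exact mul_le_mul_of_nonneg_left (hbound j) (abs_nonneg _)
    _ = η * ∑ j, |c j| := by rw [← Finset.sum_mul, mul_comm]
    _ ≤ η * Real.sqrt (i - 1 : ℕ) := mul_le_mul_of_nonneg_left hcs hη
end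

section
/- (Tree finite-size criterion, operator form) Let {P_e} be orthogonal projections indexed by the edges e of the rooted k-ary tree of depth L ≥ 4, such that P_e and P_{e'} commute whenever e and e' share no vertex, and suppose (P_e + P_{e'})² ≥ γ(P_e + P_{e'}) for every pair of edges sharing exactly one vertex, where 1 - 1/(2k) < γ ≤ 1. Then H = Σ_e P_e satisfies H² ≥ 2k(γ - 1 + 1/(2k)) H. -/
set_option maxHeartbeats 1000000
set_option synthInstance.maxHeartbeats 400000

open Finset

def treeEdges (k L : ℕ) : Finset (List (Fin k)) :=
  (Finset.range L).biUnion fun n =>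
    (Finset.univ : Finset (Fin (n + 1) → Fin k)).image List.ofFn

def sharesVertex {k : ℕ} (e e' : List (Fin k)) : Prop :=
  e = e' ∨ e = e'.dropLast ∨ e.dropLast = e' ∨ e.dropLast = e'.dropLast

instance {k : ℕ} (e e' : List (Fin k)) : Decidable (sharesVertex e e') := by
  unfold sharesVertex; infer_instance

lemma sharesVertex_symm {k : ℕ} {e e' : List (Fin k)} (h : sharesVertex e e') :
    sharesVertex e' e := by unfold sharesVertex at *; tauto

lemma ne_nil_of_mem_treeEdges {k L : ℕ} {e : List (Fin k)} (he : e ∈ treeEdges k L) :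
    e ≠ [] := by
  simp only [treeEdges, Finset.mem_biUnion, Finset.mem_image, Finset.mem_range,
    Finset.mem_univ, true_and] at he
  obtain ⟨n, -, f, rfl⟩ := he
  simp [List.ofFn_eq_nil_iff]

/-- The edges adjacent to `e` (sharing a vertex, distinct from `e`). -/
def adjSet (k L : ℕ) (e : List (Fin k)) : Finset (List (Fin k)) :=
  ((treeEdges k L).erase e).filter (fun e' => sharesVertex e e')

/-- The edges distinct from `e` and not sharing a vertex with `e`. -/
def nadjSet (k L : ℕ) (e : List (Fin k)) : Finset (List (Fin k)) :=
  ((treeEdges k L).erase e).filter (fun e' => ¬ sharesVertex e e')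

lemma mem_adjSet {k L : ℕ} {e e' : List (Fin k)} :
    e' ∈ adjSet k L e ↔ e' ∈ treeEdges k L ∧ e' ≠ e ∧ sharesVertex e e' := by
  simp only [adjSet, Finset.mem_filter, Finset.mem_erase]; tauto

lemma mem_nadjSet {k L : ℕ} {e e' : List (Fin k)} :
    e' ∈ nadjSet k L e ↔ e' ∈ treeEdges k L ∧ e' ≠ e ∧ ¬ sharesVertex e e' := by
  simp only [nadjSet, Finset.mem_filter, Finset.mem_erase]; tauto

lemma card_adj_le {k L : ℕ} (hk : 1 ≤ k) {e : List (Fin k)} (he : e ∈ treeEdges k L) :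
    (adjSet k L e).card ≤ 2 * k := by
  have hene : e ≠ [] := ne_nil_of_mem_treeEdges he
  set A : Finset (List (Fin k)) := Finset.univ.image (fun a : Fin k => e ++ [a]) with hA
  set B : Finset (List (Fin k)) := {e.dropLast} with hB
  set C : Finset (List (Fin k)) :=
    (Finset.univ.image (fun a : Fin k => e.dropLast ++ [a])).erase e with hC
  have hsub : adjSet k L e ⊆ A ∪ B ∪ C := by
    intro e' he'
    rw [mem_adjSet] at he'
    obtain ⟨hmem, hne, hsh⟩ := he'
    have he'ne : e' ≠ [] := ne_nil_of_mem_treeEdges hmem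
    simp only [Finset.mem_union, hA, hB, hC, Finset.mem_image, Finset.mem_erase,
      Finset.mem_singleton, Finset.mem_univ, true_and]
    rcases hsh with h | h | h | h
    · exact absurd h.symm hne
    · left; left; exact ⟨e'.getLast he'ne, by rw [h]; exact List.dropLast_append_getLast he'ne⟩
    · left; right; exact h.symm
    · right; exact ⟨hne, e'.getLast he'ne, by rw [h]; exact List.dropLast_append_getLast he'ne⟩
  calc (adjSet k L e).card
      ≤ (A ∪ B ∪ C).card := Finset.card_le_card hsub
    _ ≤ A.card + B.card + C.card := by
        refine le_trans (Finset.card_union_le _ _) ?_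
        exact Nat.add_le_add_right (Finset.card_union_le _ _) _
    _ ≤ k + 1 + (k - 1) := by
        refine Nat.add_le_add (Nat.add_le_add ?_ ?_) ?_
        · exact le_trans (Finset.card_image_le) (by simp)
        · simp [hB]
        · have hemem : e ∈ Finset.univ.image (fun a : Fin k => e.dropLast ++ [a]) := by
            simp only [Finset.mem_image, Finset.mem_univ, true_and]
            exact ⟨e.getLast hene, List.dropLast_append_getLast hene⟩
          rw [hC, Finset.card_erase_of_mem hemem]
          exact Nat.sub_le_sub_right (le_trans Finset.card_image_le (by simp)) 1
    _ ≤ 2 * k := by omega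

section OperatorLemmas

variable {E : Type*} [NormedAddCommGroup E] [InnerProductSpace ℂ E] [FiniteDimensional ℂ E]

open ContinuousLinearMap

lemma isPositive_of_proj {P : E →L[ℂ] E} (h1 : IsSelfAdjoint P) (h2 : IsIdempotentElem P) :
    P.IsPositive := by
  refine ⟨h1.isSymmetric, fun x => ?_⟩
  have h : (inner ℂ (P x) x : ℂ) = inner ℂ (P x) (P x) := by
    conv_lhs => rw [← h2.eq]
    rw [ContinuousLinearMap.mul_apply, ← ContinuousLinearMap.adjoint_inner_left, h1.adjoint_eq]
  rw [ContinuousLinearMap.reApplyInnerSelf_apply, h]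
  exact inner_self_nonneg

lemma isPositive_smul_real {r : ℝ} (hr : 0 ≤ r) {T : E →L[ℂ] E} (hT : T.IsPositive) :
    (r • T).IsPositive := by
  refine ⟨((IsSelfAdjoint.all r).smul hT.isSelfAdjoint).isSymmetric, fun x => ?_⟩
  rw [ContinuousLinearMap.reApplyInnerSelf_apply, ContinuousLinearMap.smul_apply,
    RCLike.real_smul_eq_coe_smul (K := ℂ), inner_smul_left]
  simp only [RCLike.conj_ofReal, RCLike.re_ofReal_mul]
  exact mul_nonneg hr (hT.2 x)

lemma isPositive_sum {ι : Type*} {s : Finset ι} {f : ι → E →L[ℂ] E}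
    (h : ∀ i ∈ s, (f i).IsPositive) : (∑ i ∈ s, f i).IsPositive :=
  Finset.sum_induction f _ (fun _ _ ha hb => ha.add hb) ContinuousLinearMap.isPositive_zero h

lemma isPositive_mul_of_comm {P Q : E →L[ℂ] E} (hP1 : IsSelfAdjoint P) (hP2 : IsIdempotentElem P)
    (hQ1 : IsSelfAdjoint Q) (hQ2 : IsIdempotentElem Q) (hc : P * Q = Q * P) :
    (P * Q).IsPositive := by
  have h := (isPositive_of_proj hP1 hP2).conj_adjoint Q
  rw [← ContinuousLinearMap.star_eq_adjoint, hQ1.star_eq] at h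
  have he : Q ∘L P ∘L Q = P * Q := by
    show Q * (P * Q) = P * Q
    rw [hc, ← mul_assoc, hQ2.eq]
  rwa [he] at h

end OperatorLemmas

/-- Tree finite-size criterion (operator form): for projections `P_e` on the edges of
the rooted `k`-ary tree of depth `L ≥ 4`, commuting when edges share no vertex, such
that `(P_e + P_{e'})² ≥ γ(P_e + P_{e'})` whenever `e ≠ e'` share a vertex, with
`1 - 1/(2k) < γ ≤ 1`, the Hamiltonian `H = Σ_e P_e` satisfies
`H² ≥ 2k(γ - 1 + 1/(2k)) H`. -/
theorem stmt17 {E : Type*} [NormedAddCommGroup E] [InnerProductSpace ℂ E]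
    [FiniteDimensional ℂ E] (k L : ℕ) (hk : 2 ≤ k) (hL : 4 ≤ L)
    (P : List (Fin k) → E →L[ℂ] E)
    (hproj : ∀ e ∈ treeEdges k L, IsSelfAdjoint (P e) ∧ IsIdempotentElem (P e))
    (hcomm : ∀ e ∈ treeEdges k L, ∀ e' ∈ treeEdges k L, ¬ sharesVertex e e' →
      P e * P e' = P e' * P e)
    (γ : ℝ) (hγ₁ : 1 - 1 / (2 * k) < γ) (hγ₂ : γ ≤ 1)
    (hgap : ∀ e ∈ treeEdges k L, ∀ e' ∈ treeEdges k L, e ≠ e' → sharesVertex e e' →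
      ((P e + P e') * (P e + P e') - γ • (P e + P e')).IsPositive) :
    ((∑ e ∈ treeEdges k L, P e) * (∑ e ∈ treeEdges k L, P e) -
      (2 * k * (γ - 1 + 1 / (2 * k))) • ∑ e ∈ treeEdges k L, P e).IsPositive := by
  set s := treeEdges k L with hs
  set c : ℝ := 2 * k * (γ - 1 + 1 / (2 * k)) with hcdef
  have hk0 : (k : ℝ) ≠ 0 := by positivity
  have hγ0 : 0 ≤ 1 - γ := by linarith
  have hc : 1 - c = (1 - γ) * (2 * k) := by
    rw [hcdef]; field_simp; ring
  set A : List (Fin k) → Finset (List (Fin k)) := adjSet k L with hAdef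
  set N : List (Fin k) → Finset (List (Fin k)) := nadjSet k L with hNdef
  -- symmetry of the adjacency double sum
  have hsymm : ∀ (g : List (Fin k) → List (Fin k) → (E →L[ℂ] E)),
      ∑ e ∈ s, ∑ e' ∈ A e, g e e' = ∑ e ∈ s, ∑ e' ∈ A e, g e' e := by
    intro g
    refine Finset.sum_comm' ?_
    intro x y
    simp only [hAdef, mem_adjSet]
    constructor
    · rintro ⟨hx, hy, hyx, hsh⟩
      exact ⟨⟨hx, fun h => hyx h.symm, sharesVertex_symm hsh⟩, hy⟩
    · rintro ⟨⟨hx, hxy, hsh⟩, hy⟩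
      exact ⟨hx, hy, fun h => hxy h.symm, sharesVertex_symm hsh⟩
  -- Step 1: expansion of H*H
  have E1 : (∑ e ∈ s, P e) * (∑ e ∈ s, P e)
      = (∑ e ∈ s, P e) + (∑ e ∈ s, ∑ e' ∈ A e, P e * P e')
        + ∑ e ∈ s, ∑ e' ∈ N e, P e * P e' := by
    rw [Finset.sum_mul_sum]
    rw [← Finset.sum_add_distrib, ← Finset.sum_add_distrib]
    refine Finset.sum_congr rfl (fun e he => ?_)
    rw [← Finset.sum_erase_add s _ he, (hproj e he).2.eq,
      ← Finset.sum_filter_add_sum_filter_not (s.erase e) (fun e' => sharesVertex e e')]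
    simp only [hAdef, hNdef, adjSet, nadjSet, ← hs]
    abel
  -- Step 2: expansion of the gap-term sum
  have E2 : (∑ e ∈ s, ∑ e' ∈ A e,
        (1/2 : ℝ) • ((P e + P e') * (P e + P e') - γ • (P e + P e')))
      = (∑ e ∈ s, ∑ e' ∈ A e, P e * P e')
        + ∑ e ∈ s, (((A e).card : ℝ) * (1 - γ)) • P e := by
    have step1 : ∀ e ∈ s, ∀ e' ∈ A e,
        (1/2 : ℝ) • ((P e + P e') * (P e + P e') - γ • (P e + P e'))
        = ((1/2 : ℝ) • (P e * P e') + (1/2 : ℝ) • (P e' * P e))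
          + (((1 - γ)/2) • P e + ((1 - γ)/2) • P e') := by
      intro e he e' he'
      have he's : e' ∈ s := (mem_adjSet.mp he').1
      rw [add_mul, mul_add, mul_add, (hproj e he).2.eq, (hproj e' he's).2.eq]
      module
    calc (∑ e ∈ s, ∑ e' ∈ A e,
        (1/2 : ℝ) • ((P e + P e') * (P e + P e') - γ • (P e + P e')))
        = ∑ e ∈ s, ∑ e' ∈ A e, (((1/2 : ℝ) • (P e * P e') + (1/2 : ℝ) • (P e' * P e))
          + (((1 - γ)/2) • P e + ((1 - γ)/2) • P e')) :=
          Finset.sum_congr rfl fun e he => Finset.sum_congr rfl fun e' he' => step1 e he e' he'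
      _ = ((∑ e ∈ s, ∑ e' ∈ A e, (1/2 : ℝ) • (P e * P e'))
            + ∑ e ∈ s, ∑ e' ∈ A e, (1/2 : ℝ) • (P e' * P e))
          + ((∑ e ∈ s, ∑ e' ∈ A e, ((1 - γ)/2) • P e)
            + ∑ e ∈ s, ∑ e' ∈ A e, ((1 - γ)/2) • P e') := by
          simp only [← Finset.sum_add_distrib]
      _ = ((∑ e ∈ s, ∑ e' ∈ A e, (1/2 : ℝ) • (P e * P e'))
            + ∑ e ∈ s, ∑ e' ∈ A e, (1/2 : ℝ) • (P e * P e'))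
          + ((∑ e ∈ s, ∑ e' ∈ A e, ((1 - γ)/2) • P e)
            + ∑ e ∈ s, ∑ e' ∈ A e, ((1 - γ)/2) • P e) := by
          rw [hsymm (fun a b => (1/2 : ℝ) • (P b * P a)),
            hsymm (fun a b => ((1 - γ)/2) • P b)]
      _ = (∑ e ∈ s, ∑ e' ∈ A e, P e * P e')
          + ∑ e ∈ s, ∑ e' ∈ A e, (1 - γ) • P e := by
          congr 1
          · rw [← Finset.sum_add_distrib]
            refine Finset.sum_congr rfl fun e he => ?_
            rw [← Finset.sum_add_distrib]
            refine Finset.sum_congr rfl fun e' he' => ?_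
            rw [← add_smul]
            norm_num
          · rw [← Finset.sum_add_distrib]
            refine Finset.sum_congr rfl fun e he => ?_
            rw [← Finset.sum_add_distrib]
            refine Finset.sum_congr rfl fun e' he' => ?_
            rw [← add_smul]
            congr 1
            ring
      _ = (∑ e ∈ s, ∑ e' ∈ A e, P e * P e')
          + ∑ e ∈ s, (((A e).card : ℝ) * (1 - γ)) • P e := by
          congr 1
          refine Finset.sum_congr rfl fun e he => ?_
          rw [Finset.sum_const, ← Nat.cast_smul_eq_nsmul ℝ, smul_smul]
  -- Step 3: the diagonal terms
  have E3 : (∑ e ∈ s, P e) - c • ∑ e ∈ s, P e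
      = (∑ e ∈ s, (((A e).card : ℝ) * (1 - γ)) • P e)
        + ∑ e ∈ s, ((1 - γ) * (2 * (k : ℝ) - ((A e).card : ℝ))) • P e := by
    rw [Finset.smul_sum, ← Finset.sum_sub_distrib, ← Finset.sum_add_distrib]
    refine Finset.sum_congr rfl fun e he => ?_
    have : P e - c • P e = (1 - c) • P e := by
      rw [sub_smul, one_smul]
    rw [this, ← add_smul]
    congr 1
    rw [hc]; ring
  -- Key identity
  have key : (∑ e ∈ s, P e) * (∑ e ∈ s, P e) - c • ∑ e ∈ s, P e
      = (∑ e ∈ s, ∑ e' ∈ N e, P e * P e')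
        + (∑ e ∈ s, ∑ e' ∈ A e,
            (1/2 : ℝ) • ((P e + P e') * (P e + P e') - γ • (P e + P e')))
        + ∑ e ∈ s, ((1 - γ) * (2 * (k : ℝ) - ((A e).card : ℝ))) • P e := by
    rw [E1, E2]
    rw [show (∑ e ∈ s, P e) + (∑ e ∈ s, ∑ e' ∈ A e, P e * P e')
        + (∑ e ∈ s, ∑ e' ∈ N e, P e * P e') - c • ∑ e ∈ s, P e
        = (∑ e ∈ s, ∑ e' ∈ A e, P e * P e') + (∑ e ∈ s, ∑ e' ∈ N e, P e * P e')
          + ((∑ e ∈ s, P e) - c • ∑ e ∈ s, P e) from by abel, E3]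
    abel
  rw [key]
  refine ContinuousLinearMap.IsPositive.add (ContinuousLinearMap.IsPositive.add ?_ ?_) ?_
  · refine isPositive_sum fun e he => isPositive_sum fun e' he' => ?_
    obtain ⟨he's, hne, hnsh⟩ := mem_nadjSet.mp he'
    exact isPositive_mul_of_comm (hproj e he).1 (hproj e he).2 (hproj e' he's).1
      (hproj e' he's).2 (hcomm e he e' he's hnsh)
  · refine isPositive_sum fun e he => isPositive_sum fun e' he' => ?_
    obtain ⟨he's, hne, hsh⟩ := mem_adjSet.mp he'
    exact isPositive_smul_real (by norm_num) (hgap e he e' he's (Ne.symm hne) hsh)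
  · refine isPositive_sum fun e he => ?_
    refine isPositive_smul_real ?_ (isPositive_of_proj (hproj e he).1 (hproj e he).2)
    have hcard : ((A e).card : ℝ) ≤ 2 * (k : ℝ) := by
      have h1 := card_adj_le (show 1 ≤ k by omega) he
      calc ((A e).card : ℝ) ≤ ((2 * k : ℕ) : ℝ) := by exact_mod_cast h1
        _ = 2 * (k : ℝ) := by push_cast; ring
    have : 0 ≤ 2 * (k : ℝ) - ((A e).card : ℝ) := by linarith
    exact mul_nonneg hγ0 this
end
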